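/- arXiv:2102.06688 — 4 statements merged into one kernel-verified Lean document; each statement's English description precedes it below -/
import Mathlib

section
/- In a finite thick generalized quadrangle of order (s,t), any set of pairwise non-opposite chambers has at most (s+1)(t+1) elements. -/
set_option linter.unusedSectionVars false


/-- A finite generalized quadrangle of order `(s, t)`: every line has `s + 1` points,
every point lies on `t + 1` lines, two distinct points lie on at most one common line,
and for every anti-flag `(p, l)` there is a unique point of `l` collinear with `p`. -/
structure GenQuad (Pt Ln : Type*) (s t : ℕ) where
  incid : Pt → Ln → Prop
  line_card : ∀ l : Ln, Nat.card {p : Pt // incid p l} = s + 1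
  point_card : ∀ p : Pt, Nat.card {l : Ln // incid p l} = t + 1
  unique_line : ∀ ⦃p q : Pt⦄ ⦃l m : Ln⦄, p ≠ q → incid p l → incid q l →
    incid p m → incid q m → l = m
  antiflag : ∀ ⦃p : Pt⦄ ⦃l : Ln⦄, ¬ incid p l →
    ∃! q : Pt, incid q l ∧ ∃ m : Ln, incid p m ∧ incid q m

variable {Pt Ln : Type*} {s t : ℕ}

/-- Two points are collinear if some line contains both. -/
def GenQuad.Collinear (G : GenQuad Pt Ln s t) (p q : Pt) : Prop :=
  ∃ m : Ln, G.incid p m ∧ G.incid q m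

/-- A chamber is an incident point-line pair. -/
def GenQuad.IsChamber (G : GenQuad Pt Ln s t) (c : Pt × Ln) : Prop :=
  G.incid c.1 c.2

/-- Two chambers are opposite if their lines share no point and their points are
not collinear. -/
def GenQuad.Opp (G : GenQuad Pt Ln s t) (c c' : Pt × Ln) : Prop :=
  (¬ ∃ q : Pt, G.incid q c.2 ∧ G.incid q c'.2) ∧ ¬ G.Collinear c.1 c'.1

/-- `F(P)`: the set of chambers whose line passes through the point `P`. -/
def GenQuad.FlagsThruPoint (G : GenQuad Pt Ln s t) (P : Pt) : Set (Pt × Ln) :=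
  {c | G.IsChamber c ∧ G.incid P c.2}

/-- `F(l)`: the set of chambers whose point lies on the line `l`. -/
def GenQuad.FlagsOnLine (G : GenQuad Pt Ln s t) (l : Ln) : Set (Pt × Ln) :=
  {c | G.IsChamber c ∧ G.incid c.1 l}

/-- A set of pairwise non-opposite chambers. -/
def GenQuad.NonOppSet (G : GenQuad Pt Ln s t) (X : Set (Pt × Ln)) : Prop :=
  (∀ c ∈ X, G.IsChamber c) ∧ ∀ c ∈ X, ∀ c' ∈ X, ¬ G.Opp c c'

/-- A maximal set of pairwise non-opposite chambers. -/
def GenQuad.MaxNonOppSet (G : GenQuad Pt Ln s t) (X : Set (Pt × Ln)) : Prop :=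
  G.NonOppSet X ∧ ∀ c : Pt × Ln, G.IsChamber c → c ∉ X → ∃ c' ∈ X, G.Opp c c'

namespace GenQuad

variable (G : GenQuad Pt Ln s t)

lemma exists_line_through (p : Pt) : ∃ l, G.incid p l := by
  have h := G.point_card p
  have : Nonempty {l // G.incid p l} := by
    have h2 : 0 < Nat.card {l // G.incid p l} := by omega
    exact (Nat.card_pos_iff.mp h2).1
  obtain ⟨l, hl⟩ := this
  exact ⟨l, hl⟩

lemma collinear_refl (p : Pt) : G.Collinear p p := by
  obtain ⟨l, hl⟩ := G.exists_line_through p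
  exact ⟨l, hl, hl⟩

lemma collinear_symm {p q : Pt} (h : G.Collinear p q) : G.Collinear q p := by
  obtain ⟨m, h1, h2⟩ := h; exact ⟨m, h2, h1⟩

lemma noTriangle {p q r : Pt} {l m m' : Ln} (hpq : p ≠ q) (hpl : G.incid p l)
    (hql : G.incid q l) (hrl : ¬ G.incid r l) (hpm : G.incid p m) (hrm : G.incid r m)
    (hqm' : G.incid q m') (hrm' : G.incid r m') : False :=
  hpq ((G.antiflag hrl).unique ⟨hpl, m, hrm, hpm⟩ ⟨hql, m', hrm', hqm'⟩)

lemma antiflag_unique {r z z' : Pt} {l : Ln} (hrl : ¬ G.incid r l) (hz : G.incid z l)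
    (hz' : G.incid z' l) (h1 : G.Collinear z r) (h2 : G.Collinear z' r) : z = z' := by
  obtain ⟨a, ha1, ha2⟩ := h1
  obtain ⟨b, hb1, hb2⟩ := h2
  exact (G.antiflag hrl).unique ⟨hz, a, ha2, ha1⟩ ⟨hz', b, hb2, hb1⟩

lemma L3 {p q r : Pt} {a : Ln} (hpq : p ≠ q) (hpa : G.incid p a) (hqa : G.incid q a)
    (h1 : G.Collinear p r) (h2 : G.Collinear q r) : G.incid r a := by
  by_contra hr
  obtain ⟨m, hm1, hm2⟩ := h1
  obtain ⟨m', hm'1, hm'2⟩ := h2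
  exact G.noTriangle hpq hpa hqa hr hm1 hm2 hm'1 hm'2

lemma dualL3 {a b c : Ln} {Q : Pt} (hab : a ≠ b) (hQa : G.incid Q a) (hQb : G.incid Q b)
    (h1 : ∃ x, G.incid x c ∧ G.incid x a) (h2 : ∃ y, G.incid y c ∧ G.incid y b) :
    G.incid Q c := by
  by_contra hQc
  obtain ⟨x, hxc, hxa⟩ := h1
  obtain ⟨y, hyc, hyb⟩ := h2
  have hxQ : x ≠ Q := fun h => hQc (h ▸ hxc)
  have hyQ : y ≠ Q := fun h => hQc (h ▸ hyc)
  have hxy : x ≠ y := by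
    rintro rfl
    exact hab (G.unique_line hxQ hxa hQa hyb hQb)
  exact G.noTriangle hxy hxc hyc hQc hxa hQa hyb hQb


def dual (G : GenQuad Pt Ln s t) : GenQuad Ln Pt t s where
  incid l p := G.incid p l
  line_card p := G.point_card p
  point_card l := G.line_card l
  unique_line := by
    intro a b x y hab hax hay hbx hby
    by_contra hxy
    exact hab (G.unique_line hxy hax hbx hay hby)
  antiflag := by
    intro a p h
    obtain ⟨q, ⟨hql, m, hpm, hqm⟩, huniq⟩ := G.antiflag h
    refine ⟨m, ⟨hpm, q, hql, hqm⟩, ?_⟩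
    rintro b ⟨hpb, w, hwa, hwb⟩
    have hwq : w = q := huniq w ⟨hwa, b, hpb, hwb⟩
    subst hwq
    have hpw : p ≠ w := fun hh => h (hh ▸ hwa)
    exact G.unique_line hpw hpb hwb hpm hqm

lemma dual_opp_iff {c c' : Pt × Ln} :
    G.dual.Opp c.swap c'.swap ↔ G.Opp c c' := by
  constructor
  · rintro ⟨h1, h2⟩; exact ⟨h2, h1⟩
  · rintro ⟨h1, h2⟩; exact ⟨h2, h1⟩

lemma dual_nonOppSet {X : Set (Pt × Ln)} (hX : G.NonOppSet X) :
    G.dual.NonOppSet (Prod.swap '' X) := by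
  constructor
  · rintro c ⟨d, hd, rfl⟩
    exact hX.1 d hd
  · rintro c ⟨d, hd, rfl⟩ c' ⟨d', hd', rfl⟩ hopp
    exact hX.2 d hd d' hd' ((G.dual_opp_iff).mp hopp)

section Counting

variable [Finite Pt] [Finite Ln]

lemma card_lines_through (p : Pt) : {l | G.incid p l}.ncard = t + 1 := by
  rw [← Nat.card_coe_set_eq]
  exact G.point_card p

lemma card_points_on (l : Ln) : {p | G.incid p l}.ncard = s + 1 := by
  rw [← Nat.card_coe_set_eq]
  exact G.line_card l

lemma card_lines_through_ne {p : Pt} {l0 : Ln} (hpl : G.incid p l0) :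
    {l | G.incid p l ∧ l ≠ l0}.ncard ≤ t := by
  have hss : {l | G.incid p l ∧ l ≠ l0} ⊂ {l | G.incid p l} := by
    constructor
    · intro l hl; exact hl.1
    · intro h
      exact (h hpl).2 rfl
  have := Set.ncard_lt_ncard hss (Set.toFinite _)
  rw [G.card_lines_through p] at this
  omega

lemma card_points_on_ne {x : Pt} {b : Ln} (hxb : G.incid x b) :
    {p | G.incid p b ∧ p ≠ x}.ncard ≤ s := by
  have hss : {p | G.incid p b ∧ p ≠ x} ⊂ {p | G.incid p b} := by
    constructor
    · intro p hp; exact hp.1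
    · intro h
      exact (h hxb).2 rfl
  have := Set.ncard_lt_ncard hss (Set.toFinite _)
  rw [G.card_points_on b] at this
  omega

lemma card_flag_line (a : Ln) :
    {c : Pt × Ln | G.incid c.1 a ∧ G.incid c.1 c.2}.ncard = (s + 1) * (t + 1) := by
  rw [← Nat.card_coe_set_eq]
  have e : ↥{c : Pt × Ln | G.incid c.1 a ∧ G.incid c.1 c.2} ≃
      Σ p : {p : Pt // G.incid p a}, {l : Ln // G.incid p.1 l} :=
    { toFun := fun c => ⟨⟨c.1.1, c.2.1⟩, ⟨c.1.2, c.2.2⟩⟩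
      invFun := fun x => ⟨(x.1.1, x.2.1), x.1.2, x.2.2⟩
      left_inv := fun c => rfl
      right_inv := fun x => rfl }
  rw [Nat.card_congr e]
  letI : Fintype {p : Pt // G.incid p a} := Fintype.ofFinite _
  letI : ∀ p : {p : Pt // G.incid p a}, Fintype {l : Ln // G.incid p.1 l} :=
    fun p => Fintype.ofFinite _
  rw [Nat.card_eq_fintype_card, Fintype.card_sigma]
  have h1 : ∀ p : {p : Pt // G.incid p a}, Fintype.card {l : Ln // G.incid p.1 l} = t + 1 :=
    fun p => by rw [← Nat.card_eq_fintype_card]; exact G.point_card p.1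
  have h2 : Fintype.card {p : Pt // G.incid p a} = s + 1 := by
    rw [← Nat.card_eq_fintype_card]; exact G.line_card a
  simp only [h1, Finset.sum_const, Finset.card_univ, smul_eq_mul, h2]

lemma traceBound {x y Z : Pt} {lx : Ln} (hxy : ¬ G.Collinear x y) (hxlx : G.incid x lx)
    (hZlx : G.incid Z lx) (hZy : G.Collinear Z y) :
    {z | G.Collinear z x ∧ G.Collinear z y ∧ z ≠ Z}.ncard ≤ t := by
  have hylx : ¬ G.incid y lx := fun h => hxy ⟨lx, hxlx, h⟩
  have hnl : Nonempty Ln := ⟨(G.exists_line_through x).choose⟩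
  classical
  set f : Pt → Ln := fun z =>
    if h : ∃ m, G.incid z m ∧ G.incid x m then h.choose else Classical.arbitrary Ln with hf
  have key : ∀ z ∈ {z | G.Collinear z x ∧ G.Collinear z y ∧ z ≠ Z},
      G.incid z (f z) ∧ G.incid x (f z) := by
    intro z hz
    obtain ⟨hzx, hzy, hzZ⟩ := hz
    have h' : ∃ m, G.incid z m ∧ G.incid x m := hzx
    simp only [hf, dif_pos h']
    exact h'.choose_spec
  have hmap : ∀ z ∈ {z | G.Collinear z x ∧ G.Collinear z y ∧ z ≠ Z},
      f z ∈ {l | G.incid x l ∧ l ≠ lx} := by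
    intro z hz
    obtain ⟨hz1, hz2⟩ := key z hz
    refine ⟨hz2, ?_⟩
    rintro rfl
    exact hz.2.2 (G.antiflag_unique hylx hz1 hZlx hz.2.1 hZy)
  have hinj : Set.InjOn f {z | G.Collinear z x ∧ G.Collinear z y ∧ z ≠ Z} := by
    intro z hz z' hz' heq
    obtain ⟨hz1, hz2⟩ := key z hz
    obtain ⟨hz'1, hz'2⟩ := key z' hz'
    rw [heq] at hz1
    have hyf : ¬ G.incid y (f z') := fun h => hxy ⟨f z', hz'2, h⟩
    exact G.antiflag_unique hyf hz1 hz'1 hz.2.1 hz'.2.1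
  calc {z | G.Collinear z x ∧ G.Collinear z y ∧ z ≠ Z}.ncard
      ≤ {l | G.incid x l ∧ l ≠ lx}.ncard :=
        Set.ncard_le_ncard_of_injOn f hmap hinj (Set.toFinite _)
    _ ≤ t := G.card_lines_through_ne hxlx


lemma bound_allCollinear {X : Set (Pt × Ln)} (hX : G.NonOppSet X)
    (h : ∀ c ∈ X, ∀ c' ∈ X, G.Collinear c.1 c'.1) : X.ncard ≤ (s + 1) * (t + 1) := by
  by_cases hne : ∃ c ∈ X, ∃ c' ∈ X, c.1 ≠ c'.1
  · obtain ⟨c, hc, c', hc', hcc'⟩ := hne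
    obtain ⟨n, hn1, hn2⟩ := h c hc c' hc'
    have hall : ∀ d ∈ X, G.incid d.1 n := by
      intro d hd
      exact G.L3 hcc' hn1 hn2 (h c hc d hd) (h c' hc' d hd)
    have hsub : X ⊆ {e : Pt × Ln | G.incid e.1 n ∧ G.incid e.1 e.2} := by
      intro d hd
      exact ⟨hall d hd, hX.1 d hd⟩
    calc X.ncard ≤ _ := Set.ncard_le_ncard hsub (Set.toFinite _)
      _ = (s + 1) * (t + 1) := G.card_flag_line n
  · push_neg at hne
    rcases Set.eq_empty_or_nonempty X with rfl | ⟨c0, hc0⟩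
    · simp
    · have hmap : ∀ c ∈ X, (c.2 : Ln) ∈ {l | G.incid c0.1 l} := by
        intro c hc
        have h1 := hX.1 c hc
        have h2 : c0.1 = c.1 := hne c0 hc0 c hc
        show G.incid c0.1 c.2
        rw [h2]
        exact h1
      have hinj : Set.InjOn Prod.snd X := by
        intro c hc c' hc' heq
        have h1 : c.1 = c'.1 := by rw [← hne c0 hc0 c hc, ← hne c0 hc0 c' hc']
        exact Prod.ext h1 heq
      have h2 : X.ncard ≤ t + 1 := by
        calc X.ncard ≤ {l | G.incid c0.1 l}.ncard :=
              Set.ncard_le_ncard_of_injOn Prod.snd hmap hinj (Set.toFinite _)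
          _ = t + 1 := G.card_lines_through c0.1
      calc X.ncard ≤ t + 1 := h2
        _ ≤ (s + 1) * (t + 1) := Nat.le_mul_of_pos_left _ (by omega)


lemma collinear_of_two {X : Set (Pt × Ln)} (hX : G.NonOppSet X) {c1 c2 c : Pt × Ln}
    (hc1 : c1 ∈ X) (hc2 : c2 ∈ X) (hp : c1.1 = c2.1) (hl : c1.2 ≠ c2.2) (hc : c ∈ X) :
    G.Collinear c.1 c1.1 := by
  by_contra hcol
  have hcol2 : ¬ G.Collinear c.1 c2.1 := by rw [← hp]; exact hcol
  have h1 : ∃ q, G.incid q c.2 ∧ G.incid q c1.2 := by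
    by_contra hno
    exact hX.2 c hc c1 hc1 ⟨hno, hcol⟩
  have h2 : ∃ q, G.incid q c.2 ∧ G.incid q c2.2 := by
    by_contra hno
    exact hX.2 c hc c2 hc2 ⟨hno, hcol2⟩
  obtain ⟨R1, hR1c, hR1m⟩ := h1
  obtain ⟨R2, hR2c, hR2m⟩ := h2
  set P0 := c1.1 with hP0
  have hP0c : ¬ G.incid P0 c.2 := fun h => hcol ⟨c.2, hX.1 c hc, h⟩
  have hR1P0 : R1 ≠ P0 := fun h => hP0c (h ▸ hR1c)
  have hR2P0 : R2 ≠ P0 := fun h => hP0c (h ▸ hR2c)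
  have hP0m1 : G.incid P0 c1.2 := hX.1 c1 hc1
  have hP0m2 : G.incid P0 c2.2 := by
    show G.incid P0 c2.2
    rw [hp]
    exact hX.1 c2 hc2
  by_cases hR : R1 = R2
  · subst hR
    exact hl (G.unique_line hR1P0 hR1m hP0m1 hR2m hP0m2)
  · exact G.noTriangle hR hR1c hR2c hP0c hR1m hP0m1 hR2m hP0m2

lemma bound_samePoint {X : Set (Pt × Ln)} (hX : G.NonOppSet X) {c1 c2 : Pt × Ln}
    (hc1 : c1 ∈ X) (hc2 : c2 ∈ X) (hp : c1.1 = c2.1) (hl : c1.2 ≠ c2.2) :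
    X.ncard ≤ (s + 1) * (t + 1) := by
  classical
  set P0 := c1.1 with hP0
  have key : ∀ c ∈ X, G.Collinear c.1 P0 := fun c hc =>
    G.collinear_of_two hX hc1 hc2 hp hl hc
  by_cases huniq : ∀ d1 ∈ X, ∀ d2 ∈ X, d1.1 = d2.1 → d1.1 ≠ P0 → d1 = d2
  · -- injection into flags on lines through P0
    set S2 : Set (Pt × Ln) := {c : Pt × Ln | G.incid P0 c.2 ∧ G.incid c.1 c.2} with hS2
    set f : Pt × Ln → Pt × Ln := fun c =>
      if c.1 = P0 then c
      else (c.1, if h : ∃ m, G.incid c.1 m ∧ G.incid P0 m then h.choose else c.2) with hf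
    have hmap : ∀ c ∈ X, f c ∈ S2 := by
      intro c hc
      by_cases hcP : c.1 = P0
      · simp only [hf, if_pos hcP]
        exact ⟨hcP ▸ hX.1 c hc, hX.1 c hc⟩
      · have h' : ∃ m, G.incid c.1 m ∧ G.incid P0 m := key c hc
        simp only [hf, if_neg hcP, dif_pos h']
        exact ⟨h'.choose_spec.2, h'.choose_spec.1⟩
    have hinj : Set.InjOn f X := by
      intro c hc c' hc' heq
      by_cases hcP : c.1 = P0 <;> by_cases hc'P : c'.1 = P0
      · simpa only [hf, if_pos hcP, if_pos hc'P] using heq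
      · exfalso
        simp only [hf, if_pos hcP, if_neg hc'P] at heq
        exact hc'P (by rw [← congrArg Prod.fst heq, hcP])
      · exfalso
        simp only [hf, if_pos hc'P, if_neg hcP] at heq
        exact hcP (by rw [congrArg Prod.fst heq, hc'P])
      · simp only [hf, if_neg hcP, if_neg hc'P] at heq
        have h1 : c.1 = c'.1 := (Prod.ext_iff.mp heq).1
        exact huniq c hc c' hc' h1 hcP
    have hcard : S2.ncard = (t + 1) * (s + 1) := by
      have himg : Prod.swap '' S2 = {c : Ln × Pt | G.dual.incid c.1 P0 ∧ G.dual.incid c.1 c.2} := by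
        ext ⟨l, p⟩
        constructor
        · rintro ⟨⟨p', l'⟩, ⟨h1, h2⟩, heq⟩
          obtain ⟨rfl, rfl⟩ := Prod.mk.injEq .. ▸ heq
          exact ⟨h1, h2⟩
        · rintro ⟨h1, h2⟩
          exact ⟨(p, l), ⟨h1, h2⟩, rfl⟩
      have := G.dual.card_flag_line (s := t) (t := s) P0
      rw [← himg] at this
      rwa [Set.ncard_image_of_injective _ Prod.swap_injective] at this
    calc X.ncard ≤ S2.ncard := Set.ncard_le_ncard_of_injOn f hmap hinj (Set.toFinite _)
      _ = (t + 1) * (s + 1) := hcard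
      _ = (s + 1) * (t + 1) := Nat.mul_comm _ _
  · push_neg at huniq
    obtain ⟨d1, hd1, d2, hd2, hdp, hdP0, hdne⟩ := huniq
    have hdl : d1.2 ≠ d2.2 := by
      intro h
      exact hdne (Prod.ext hdp h)
    have key2 : ∀ c ∈ X, G.Collinear c.1 d1.1 := fun c hc =>
      G.collinear_of_two hX hd1 hd2 hdp hdl hc
    obtain ⟨n, hn1, hn2⟩ : ∃ m, G.incid d1.1 m ∧ G.incid P0 m := key d1 hd1
    have hall : ∀ c ∈ X, G.incid c.1 n := by
      intro c hc
      exact G.L3 hdP0 hn1 hn2 (G.collinear_symm (key2 c hc)) (G.collinear_symm (key c hc))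
    have hsub : X ⊆ {e : Pt × Ln | G.incid e.1 n ∧ G.incid e.1 e.2} := by
      intro d hd
      exact ⟨hall d hd, hX.1 d hd⟩
    calc X.ncard ≤ _ := Set.ncard_le_ncard hsub (Set.toFinite _)
      _ = (s + 1) * (t + 1) := G.card_flag_line n


lemma meets_of_nonOpp {X : Set (Pt × Ln)} (hX : G.NonOppSet X) {c c' : Pt × Ln}
    (hc : c ∈ X) (hc' : c' ∈ X) (h : ¬ G.Collinear c.1 c'.1) :
    ∃ q, G.incid q c.2 ∧ G.incid q c'.2 := by
  by_contra hno
  exact hX.2 c hc c' hc' ⟨hno, h⟩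

lemma bound_triple {X : Set (Pt × Ln)} (hX : G.NonOppSet X)
    (inj1 : Set.InjOn Prod.fst X) (inj2 : Set.InjOn Prod.snd X)
    {c1 c2 c3 : Pt × Ln} (hc1 : c1 ∈ X) (hc2 : c2 ∈ X) (hc3 : c3 ∈ X)
    (h12 : ¬ G.Collinear c1.1 c2.1) (h13 : ¬ G.Collinear c1.1 c3.1)
    (h23 : ¬ G.Collinear c2.1 c3.1) :
    X.ncard ≤ 4 * t + 1 := by
  obtain ⟨Z, hZ1, hZ2⟩ := G.meets_of_nonOpp hX hc1 hc2 h12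
  have hl12 : c1.2 ≠ c2.2 := by
    intro h
    exact h12 ⟨c1.2, hX.1 c1 hc1, h ▸ hX.1 c2 hc2⟩
  have hZ3 : G.incid Z c3.2 :=
    G.dualL3 hl12 hZ1 hZ2 (G.meets_of_nonOpp hX hc3 hc1 fun h => h13 (G.collinear_symm h))
      (G.meets_of_nonOpp hX hc3 hc2 fun h => h23 (G.collinear_symm h))
  set V : Set (Pt × Ln) := {c | c ∈ X ∧ G.incid Z c.2} with hV
  set M12 : Set (Pt × Ln) :=
    {c | c ∈ X ∧ ¬ G.incid Z c.2 ∧ G.Collinear c.1 c1.1 ∧ G.Collinear c.1 c2.1} with hM12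
  set M13 : Set (Pt × Ln) :=
    {c | c ∈ X ∧ ¬ G.incid Z c.2 ∧ G.Collinear c.1 c1.1 ∧ G.Collinear c.1 c3.1} with hM13
  set M23 : Set (Pt × Ln) :=
    {c | c ∈ X ∧ ¬ G.incid Z c.2 ∧ G.Collinear c.1 c2.1 ∧ G.Collinear c.1 c3.1} with hM23
  have cover : X ⊆ V ∪ (M12 ∪ (M13 ∪ M23)) := by
    intro c hc
    by_cases hZc : G.incid Z c.2
    · exact Or.inl ⟨hc, hZc⟩
    · right
      have pair : ∀ (d d' : Pt × Ln), d ∈ X → d' ∈ X → G.incid Z d.2 → G.incid Z d'.2 →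
          d.2 ≠ d'.2 → ¬ G.Collinear c.1 d.1 → ¬ G.Collinear c.1 d'.1 → False := by
        intro d d' hd hd' hZd hZd' hne hcd hcd'
        exact hZc (G.dualL3 hne hZd hZd' (G.meets_of_nonOpp hX hc hd hcd)
          (G.meets_of_nonOpp hX hc hd' hcd'))
      have hl13 : c1.2 ≠ c3.2 := by
        intro h
        exact h13 ⟨c1.2, hX.1 c1 hc1, h ▸ hX.1 c3 hc3⟩
      have hl23 : c2.2 ≠ c3.2 := by
        intro h
        exact h23 ⟨c2.2, hX.1 c2 hc2, h ▸ hX.1 c3 hc3⟩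
      by_cases ha : G.Collinear c.1 c1.1
      · by_cases hb : G.Collinear c.1 c2.1
        · exact Or.inl ⟨hc, hZc, ha, hb⟩
        · refine Or.inr (Or.inl ⟨hc, hZc, ha, ?_⟩)
          by_contra hcc
          exact pair c2 c3 hc2 hc3 hZ2 hZ3 hl23 hb hcc
      · refine Or.inr (Or.inr ⟨hc, hZc, ?_, ?_⟩)
        · by_contra hb
          exact pair c1 c2 hc1 hc2 hZ1 hZ2 hl12 ha hb
        · by_contra hcc
          exact pair c1 c3 hc1 hc3 hZ1 hZ3 hl13 ha hcc
  have hVcard : V.ncard ≤ t + 1 := by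
    have hmap : ∀ c ∈ V, (c.2 : Ln) ∈ {l | G.incid Z l} := fun c hc => hc.2
    have hinj : Set.InjOn Prod.snd V := fun c hc c' hc' h => inj2 hc.1 hc'.1 h
    calc V.ncard ≤ _ := Set.ncard_le_ncard_of_injOn Prod.snd hmap hinj (Set.toFinite _)
      _ = t + 1 := G.card_lines_through Z
  have hMbound : ∀ (x y : Pt × Ln), x ∈ X → y ∈ X → ¬ G.Collinear x.1 y.1 →
      G.incid Z x.2 → G.incid Z y.2 →
      {c | c ∈ X ∧ ¬ G.incid Z c.2 ∧ G.Collinear c.1 x.1 ∧ G.Collinear c.1 y.1}.ncard ≤ t := by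
    intro x y hx hy hxy hZx hZy
    have hTB := G.traceBound (x := x.1) (y := y.1) (Z := Z) (lx := x.2) hxy (hX.1 x hx) hZx
      ⟨y.2, hZy, hX.1 y hy⟩
    have hmap : ∀ c ∈ {c : Pt × Ln | c ∈ X ∧ ¬ G.incid Z c.2 ∧ G.Collinear c.1 x.1 ∧
        G.Collinear c.1 y.1},
        (c.1 : Pt) ∈ {z | G.Collinear z x.1 ∧ G.Collinear z y.1 ∧ z ≠ Z} := by
      intro c hc
      refine ⟨hc.2.2.1, hc.2.2.2, ?_⟩
      rintro rfl
      exact hc.2.1 (hX.1 c hc.1)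
    have hinj : Set.InjOn Prod.fst {c : Pt × Ln | c ∈ X ∧ ¬ G.incid Z c.2 ∧
        G.Collinear c.1 x.1 ∧ G.Collinear c.1 y.1} :=
      fun c hc c' hc' h => inj1 hc.1 hc'.1 h
    calc _ ≤ _ := Set.ncard_le_ncard_of_injOn Prod.fst hmap hinj (Set.toFinite _)
      _ ≤ t := hTB
  calc X.ncard ≤ (V ∪ (M12 ∪ (M13 ∪ M23))).ncard := Set.ncard_le_ncard cover (Set.toFinite _)
    _ ≤ V.ncard + (M12 ∪ (M13 ∪ M23)).ncard := Set.ncard_union_le _ _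
    _ ≤ V.ncard + (M12.ncard + (M13 ∪ M23).ncard) := by
        have := Set.ncard_union_le M12 (M13 ∪ M23)
        omega
    _ ≤ V.ncard + (M12.ncard + (M13.ncard + M23.ncard)) := by
        have := Set.ncard_union_le M13 M23
        omega
    _ ≤ (t + 1) + (t + (t + t)) := by
        have h1 := hMbound c1 c2 hc1 hc2 h12 hZ1 hZ2
        have h2 := hMbound c1 c3 hc1 hc3 h13 hZ1 hZ3
        have h3 := hMbound c2 c3 hc2 hc3 h23 hZ2 hZ3
        rw [← hM12] at h1
        rw [← hM13] at h2
        rw [← hM23] at h3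
        omega
    _ = 4 * t + 1 := by ring


lemma bound_pair {X : Set (Pt × Ln)} (hX : G.NonOppSet X)
    (inj1 : Set.InjOn Prod.fst X) (inj2 : Set.InjOn Prod.snd X)
    {c1 c2 : Pt × Ln} (hc1 : c1 ∈ X) (hc2 : c2 ∈ X)
    (hxy : ¬ G.Collinear c1.1 c2.1)
    (hno : ∀ d1 ∈ X, ∀ d2 ∈ X, ∀ d3 ∈ X, ¬ G.Collinear d1.1 d3.1 →
      ¬ G.Collinear d2.1 d3.1 → G.Collinear d1.1 d2.1) :
    X.ncard ≤ 2 * s + 2 * t + 1 := by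
  obtain ⟨Q, hQ1, hQ2⟩ := G.meets_of_nonOpp hX hc1 hc2 hxy
  have hl12 : c1.2 ≠ c2.2 := by
    intro h
    exact hxy ⟨c1.2, hX.1 c1 hc1, h ▸ hX.1 c2 hc2⟩
  set XQ : Set (Pt × Ln) := {c | c ∈ X ∧ G.incid Q c.2} with hXQ
  set A : Set (Pt × Ln) := {c | c ∈ X ∧ ¬ G.incid Q c.2 ∧ G.Collinear c.1 c1.1 ∧
    G.Collinear c.1 c2.1} with hA
  set B : Set (Pt × Ln) := {c | c ∈ X ∧ ¬ G.incid Q c.2 ∧ G.Collinear c.1 c1.1 ∧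
    ¬ G.Collinear c.1 c2.1} with hB
  set C : Set (Pt × Ln) := {c | c ∈ X ∧ ¬ G.incid Q c.2 ∧ ¬ G.Collinear c.1 c1.1} with hC
  have cover : X ⊆ XQ ∪ (A ∪ (B ∪ C)) := by
    intro c hc
    by_cases hQc : G.incid Q c.2
    · exact Or.inl ⟨hc, hQc⟩
    · right
      by_cases ha : G.Collinear c.1 c1.1
      · by_cases hb : G.Collinear c.1 c2.1
        · exact Or.inl ⟨hc, hQc, ha, hb⟩
        · exact Or.inr (Or.inl ⟨hc, hQc, ha, hb⟩)
      · exact Or.inr (Or.inr ⟨hc, hQc, ha⟩)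
  have hXQcard : XQ.ncard ≤ t + 1 := by
    have hmap : ∀ c ∈ XQ, (c.2 : Ln) ∈ {l | G.incid Q l} := fun c hc => hc.2
    have hinj : Set.InjOn Prod.snd XQ := fun c hc c' hc' h => inj2 hc.1 hc'.1 h
    calc XQ.ncard ≤ _ := Set.ncard_le_ncard_of_injOn Prod.snd hmap hinj (Set.toFinite _)
      _ = t + 1 := G.card_lines_through Q
  have hAcard : A.ncard ≤ t := by
    have hTB := G.traceBound (x := c1.1) (y := c2.1) (Z := Q) (lx := c1.2) hxy (hX.1 c1 hc1)
      hQ1 ⟨c2.2, hQ2, hX.1 c2 hc2⟩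
    have hmap : ∀ c ∈ A, (c.1 : Pt) ∈ {z | G.Collinear z c1.1 ∧ G.Collinear z c2.1 ∧ z ≠ Q} := by
      intro c hc
      refine ⟨hc.2.2.1, hc.2.2.2, ?_⟩
      rintro rfl
      exact hc.2.1 (hX.1 c hc.1)
    have hinj : Set.InjOn Prod.fst A := fun c hc c' hc' h => inj1 hc.1 hc'.1 h
    calc A.ncard ≤ _ := Set.ncard_le_ncard_of_injOn Prod.fst hmap hinj (Set.toFinite _)
      _ ≤ t := hTB
  have hBcard : B.ncard ≤ s := by
    rcases Set.eq_empty_or_nonempty B with hBe | ⟨c0, hc0⟩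
    · rw [hBe]; simp
    · have hc0X : c0 ∈ X := hc0.1
      have hc0x : c0.1 ≠ c1.1 := by
        intro h
        have : c0 = c1 := inj1 hc0X hc1 h
        rw [this] at hc0
        exact hc0.2.1 hQ1
      obtain ⟨b, hb1, hb2⟩ : ∃ m, G.incid c0.1 m ∧ G.incid c1.1 m := hc0.2.2.1
      have hmap : ∀ c ∈ B, (c.1 : Pt) ∈ {p | G.incid p b ∧ p ≠ c1.1} := by
        intro c hc
        have hcc0 : G.Collinear c.1 c0.1 :=
          hno c hc.1 c0 hc0X c2 hc2 hc.2.2.2 hc0.2.2.2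
        have hcx : G.incid c.1 b :=
          G.L3 hc0x hb1 hb2 (G.collinear_symm hcc0) (G.collinear_symm hc.2.2.1)
        refine ⟨hcx, ?_⟩
        intro h
        have : c = c1 := inj1 hc.1 hc1 h
        rw [this] at hc
        exact hc.2.1 hQ1
      have hinj : Set.InjOn Prod.fst B := fun c hc c' hc' h => inj1 hc.1 hc'.1 h
      calc B.ncard ≤ _ := Set.ncard_le_ncard_of_injOn Prod.fst hmap hinj (Set.toFinite _)
        _ ≤ s := G.card_points_on_ne hb2
  have hCy : ∀ c ∈ C, G.Collinear c.1 c2.1 := by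
    intro c hc
    by_contra hcy
    exact hc.2.1 (G.dualL3 hl12 hQ1 hQ2
      (G.meets_of_nonOpp hX hc.1 hc1 hc.2.2) (G.meets_of_nonOpp hX hc.1 hc2 hcy))
  have hCcard : C.ncard ≤ s := by
    rcases Set.eq_empty_or_nonempty C with hCe | ⟨c0, hc0⟩
    · rw [hCe]; simp
    · have hc0X : c0 ∈ X := hc0.1
      have hc0y : c0.1 ≠ c2.1 := by
        intro h
        have : c0 = c2 := inj1 hc0X hc2 h
        rw [this] at hc0
        exact hc0.2.1 hQ2
      obtain ⟨b, hb1, hb2⟩ : ∃ m, G.incid c0.1 m ∧ G.incid c2.1 m := hCy c0 hc0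
      have hmap : ∀ c ∈ C, (c.1 : Pt) ∈ {p | G.incid p b ∧ p ≠ c2.1} := by
        intro c hc
        have hcc0 : G.Collinear c.1 c0.1 :=
          hno c hc.1 c0 hc0X c1 hc1 hc.2.2 hc0.2.2
        have hcx : G.incid c.1 b :=
          G.L3 hc0y hb1 hb2 (G.collinear_symm hcc0) (G.collinear_symm (hCy c hc))
        refine ⟨hcx, ?_⟩
        intro h
        have : c = c2 := inj1 hc.1 hc2 h
        rw [this] at hc
        exact hc.2.1 hQ2
      have hinj : Set.InjOn Prod.fst C := fun c hc c' hc' h => inj1 hc.1 hc'.1 h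
      calc C.ncard ≤ _ := Set.ncard_le_ncard_of_injOn Prod.fst hmap hinj (Set.toFinite _)
        _ ≤ s := G.card_points_on_ne hb2
  calc X.ncard ≤ (XQ ∪ (A ∪ (B ∪ C))).ncard := Set.ncard_le_ncard cover (Set.toFinite _)
    _ ≤ XQ.ncard + (A ∪ (B ∪ C)).ncard := Set.ncard_union_le _ _
    _ ≤ XQ.ncard + (A.ncard + (B ∪ C).ncard) := by
        have := Set.ncard_union_le A (B ∪ C)
        omega
    _ ≤ XQ.ncard + (A.ncard + (B.ncard + C.ncard)) := by
        have := Set.ncard_union_le B C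
        omega
    _ ≤ (t + 1) + (t + (s + s)) := by omega
    _ = 2 * s + 2 * t + 1 := by ring

end Counting

end GenQuad

theorem nonOppSet_card_le [Finite Pt] [Finite Ln]
    (G : GenQuad Pt Ln s t) (hs : 2 ≤ s) (ht : 2 ≤ t)
    (X : Set (Pt × Ln)) (hX : G.NonOppSet X) :
    X.ncard ≤ (s + 1) * (t + 1) := by
  have hXd := G.dual_nonOppSet hX
  have hswap : (Prod.swap '' X).ncard = X.ncard :=
    Set.ncard_image_of_injective X Prod.swap_injective
  have hst : 2 * s ≤ s * t := by
    calc 2 * s = s * 2 := by ring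
      _ ≤ s * t := Nat.mul_le_mul le_rfl ht
  have hts : 2 * t ≤ s * t := Nat.mul_le_mul hs le_rfl
  have hexp : (s + 1) * (t + 1) = s * t + s + t + 1 := by ring
  -- Case: all points pairwise collinear
  by_cases hA : ∀ c ∈ X, ∀ c' ∈ X, G.Collinear c.1 c'.1
  · exact G.bound_allCollinear hX hA
  push_neg at hA
  obtain ⟨c1, hc1, c2, hc2, h12⟩ := hA
  -- Case: all lines pairwise meet
  by_cases hB : ∀ c ∈ X, ∀ c' ∈ X, G.dual.Collinear c.2 c'.2
  · have h := G.dual.bound_allCollinear hXd ?_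
    · rw [hswap] at h
      rw [Nat.mul_comm] at h
      exact h
    · rintro d ⟨c, hc, rfl⟩ d' ⟨c', hc', rfl⟩
      exact hB c hc c' hc'
  push_neg at hB
  obtain ⟨c3, hc3, c4, hc4, h34⟩ := hB
  -- Case: two chambers with the same point
  by_cases hP : ∀ d1 ∈ X, ∀ d2 ∈ X, d1.1 = d2.1 → d1 = d2
  swap
  · push_neg at hP
    obtain ⟨d1, hd1, d2, hd2, hdp, hdne⟩ := hP
    have hdl : d1.2 ≠ d2.2 := fun h => hdne (Prod.ext hdp h)
    exact G.bound_samePoint hX hd1 hd2 hdp hdl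
  -- Case: two chambers with the same line
  by_cases hL : ∀ d1 ∈ X, ∀ d2 ∈ X, d1.2 = d2.2 → d1 = d2
  swap
  · push_neg at hL
    obtain ⟨d1, hd1, d2, hd2, hdp, hdne⟩ := hL
    have hdl : d1.1 ≠ d2.1 := fun h => hdne (Prod.ext h hdp)
    have h := G.dual.bound_samePoint hXd (Set.mem_image_of_mem Prod.swap hd1)
      (Set.mem_image_of_mem Prod.swap hd2) hdp hdl
    rw [hswap] at h
    rw [Nat.mul_comm] at h
    exact h
  have inj1 : Set.InjOn Prod.fst X := fun c hc c' hc' h => hP c hc c' hc' h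
  have inj2 : Set.InjOn Prod.snd X := fun c hc c' hc' h => hL c hc c' hc' h
  have inj1d : Set.InjOn Prod.fst (Prod.swap '' X) := by
    rintro d ⟨c, hc, rfl⟩ d' ⟨c', hc', rfl⟩ h
    have : c = c' := inj2 hc hc' h
    rw [this]
  have inj2d : Set.InjOn Prod.snd (Prod.swap '' X) := by
    rintro d ⟨c, hc, rfl⟩ d' ⟨c', hc', rfl⟩ h
    have : c = c' := inj1 hc hc' h
    rw [this]
  -- Case: three pairwise non-collinear points
  by_cases h3 : ∃ d1 ∈ X, ∃ d2 ∈ X, ∃ d3 ∈ X, ¬ G.Collinear d1.1 d2.1 ∧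
      ¬ G.Collinear d1.1 d3.1 ∧ ¬ G.Collinear d2.1 d3.1
  · by_cases h3' : ∃ e1 ∈ X, ∃ e2 ∈ X, ∃ e3 ∈ X, ¬ G.dual.Collinear e1.2 e2.2 ∧
        ¬ G.dual.Collinear e1.2 e3.2 ∧ ¬ G.dual.Collinear e2.2 e3.2
    · by_cases hs3 : 3 ≤ s
      · obtain ⟨d1, hd1, d2, hd2, d3, hd3, g12, g13, g23⟩ := h3
        have h := G.bound_triple hX inj1 inj2 hd1 hd2 hd3 g12 g13 g23
        calc X.ncard ≤ 4 * t + 1 := h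
          _ ≤ 4 * (t + 1) := by omega
          _ ≤ (s + 1) * (t + 1) := Nat.mul_le_mul_right (t + 1) (by omega)
      · obtain ⟨e1, he1, e2, he2, e3, he3, g12, g13, g23⟩ := h3'
        have h := G.dual.bound_triple hXd inj1d inj2d
          (Set.mem_image_of_mem Prod.swap he1) (Set.mem_image_of_mem Prod.swap he2)
          (Set.mem_image_of_mem Prod.swap he3) g12 g13 g23
        rw [hswap] at h
        have hs2 : s = 2 := by omega
        subst hs2
        omega
    · -- no three pairwise disjoint lines; use the disjoint pair c3 c4
      push_neg at h3'
      have hno : ∀ d1 ∈ Prod.swap '' X, ∀ d2 ∈ Prod.swap '' X, ∀ d3 ∈ Prod.swap '' X,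
          ¬ G.dual.Collinear d1.1 d3.1 → ¬ G.dual.Collinear d2.1 d3.1 →
          G.dual.Collinear d1.1 d2.1 := by
        rintro d1 ⟨a1, ha1, rfl⟩ d2 ⟨a2, ha2, rfl⟩ d3 ⟨a3, ha3, rfl⟩ hx hy
        have h := h3' a3 ha3 a1 ha1 a2 ha2
          (fun hh => hx (G.dual.collinear_symm hh)) (fun hh => hy (G.dual.collinear_symm hh))
        exact h
      have h := G.dual.bound_pair hXd inj1d inj2d
        (Set.mem_image_of_mem Prod.swap hc3) (Set.mem_image_of_mem Prod.swap hc4) h34 hno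
      rw [hswap] at h
      calc X.ncard ≤ 2 * t + 2 * s + 1 := h
        _ ≤ s * t + s + t + 1 := by linarith
        _ = (s + 1) * (t + 1) := hexp.symm
  · push_neg at h3
    have hno : ∀ d1 ∈ X, ∀ d2 ∈ X, ∀ d3 ∈ X, ¬ G.Collinear d1.1 d3.1 →
        ¬ G.Collinear d2.1 d3.1 → G.Collinear d1.1 d2.1 := by
      intro d1 hd1 d2 hd2 d3 hd3 hx hy
      have h := h3 d3 hd3 d1 hd1 d2 hd2
        (fun hh => hx (G.collinear_symm hh)) (fun hh => hy (G.collinear_symm hh))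
      exact h
    have h := G.bound_pair hX inj1 inj2 hc1 hc2 h12 hno
    calc X.ncard ≤ 2 * s + 2 * t + 1 := h
      _ ≤ s * t + s + t + 1 := by linarith
      _ = (s + 1) * (t + 1) := hexp.symm
end

section
/- Let X be a maximal set of pairwise non-opposite chambers of a finite thick generalized quadrangle of order (s,t). If some line l0 occurs in two distinct chambers of X, then the line of every chamber of X meets l0. -/
variable {Pt Ln : Type*} {s t : ℕ}

theorem line_in_two_chambers_meets_all [Finite Pt] [Finite Ln]
    (G : GenQuad Pt Ln s t) (hs : 2 ≤ s) (ht : 2 ≤ t)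
    (X : Set (Pt × Ln)) (hX : G.MaxNonOppSet X)
    (l0 : Ln) (c c' : Pt × Ln) (hc : c ∈ X) (hc' : c' ∈ X) (hne : c ≠ c')
    (hcl : c.2 = l0) (hc'l : c'.2 = l0) :
    ∀ d ∈ X, ∃ q : Pt, G.incid q d.2 ∧ G.incid q l0 := by
  intro d hd
  by_contra hmeet
  push_neg at hmeet
  -- points of c, c' are distinct
  have hP : c.1 ≠ c'.1 := by
    intro h
    exact hne (Prod.ext h (hcl.trans hc'l.symm))
  -- d is non-opposite to c and c'
  have hno := hX.1.2 d hd c hc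
  have hno' := hX.1.2 d hd c' hc'
  unfold GenQuad.Opp at hno hno'
  rw [not_and_or, not_not, not_not] at hno hno'
  have hdisj : ¬ ∃ q : Pt, G.incid q d.2 ∧ G.incid q c.2 := by
    rintro ⟨q, hq1, hq2⟩
    exact hmeet q hq1 (hcl ▸ hq2)
  have hdisj' : ¬ ∃ q : Pt, G.incid q d.2 ∧ G.incid q c'.2 := by
    rintro ⟨q, hq1, hq2⟩
    exact hmeet q hq1 (hc'l ▸ hq2)
  have hcol : G.Collinear d.1 c.1 := hno.resolve_left hdisj
  have hcol' : G.Collinear d.1 c'.1 := hno'.resolve_left hdisj'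
  -- d.1 is not on l0
  have hd1 : ¬ G.incid d.1 l0 := fun h =>
    hmeet d.1 (hX.1.1 d hd) h
  obtain ⟨q, -, huniq⟩ := G.antiflag hd1
  have h1 : c.1 = q := huniq c.1 ⟨hcl ▸ hX.1.1 c hc, hcol⟩
  have h2 : c'.1 = q := huniq c'.1 ⟨hc'l ▸ hX.1.1 c' hc', hcol'⟩
  exact hP (h1.trans h2.symm)
end

section
/- In the finite projective space PG(3,q), for any point (or any plane) x, the set F(x) of all chambers whose line is incident with x has exactly (q^2+q+1)(q+1)^2 elements, and no two chambers of F(x) are opposite. -/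
open Module

variable (F : Type*) [Field F] [Fintype F]

/-- Subspaces of the ambient 4-dimensional vector space over `F`; the rank 1, 2, 3
subspaces are the points, lines and planes of `PG(3, q)` where `q = |F|`. -/
abbrev SubPG := Submodule F (Fin 4 → F)

variable {F}

/-- `W` is a point of `PG(3, q)`. -/
def IsPt (W : SubPG F) : Prop := finrank F W = 1

/-- `W` is a line of `PG(3, q)`. -/
def IsLn (W : SubPG F) : Prop := finrank F W = 2

/-- `W` is a plane of `PG(3, q)`. -/
def IsPl (W : SubPG F) : Prop := finrank F W = 3

/-- A chamber of `PG(3, q)`: a pairwise incident point-line-plane triple. -/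
def IsChamber (c : SubPG F × SubPG F × SubPG F) : Prop :=
  IsPt c.1 ∧ IsLn c.2.1 ∧ IsPl c.2.2 ∧ c.1 ≤ c.2.1 ∧ c.2.1 ≤ c.2.2

/-- Two chambers are opposite if the point of each does not lie in the plane of the
other and their lines are skew. -/
def Opp (c c' : SubPG F × SubPG F × SubPG F) : Prop :=
  ¬ c.1 ≤ c'.2.2 ∧ c.2.1 ⊓ c'.2.1 = ⊥ ∧ ¬ c'.1 ≤ c.2.2

/-- A point or plane `x` is incident with a line `l` when `x ⊆ l` or `l ⊆ x`. -/
def LineIncid (x l : SubPG F) : Prop := x ≤ l ∨ l ≤ x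

/-- `F(x)`: the set of all chambers whose line is incident with `x`. -/
def FF (x : SubPG F) : Set (SubPG F × SubPG F × SubPG F) :=
  {c | IsChamber c ∧ LineIncid x c.2.1}

/-- A set of pairwise non-opposite chambers. -/
def NonOppSet (X : Set (SubPG F × SubPG F × SubPG F)) : Prop :=
  (∀ c ∈ X, IsChamber c) ∧ ∀ c ∈ X, ∀ c' ∈ X, ¬ Opp c c'

/-- A maximal set of pairwise non-opposite chambers. -/
def MaxNonOppSet (X : Set (SubPG F × SubPG F × SubPG F)) : Prop :=
  NonOppSet X ∧ ∀ c : SubPG F × SubPG F × SubPG F, IsChamber c → c ∉ X → ∃ c' ∈ X, Opp c c'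

/-! ### Auxiliary counting lemmas -/

open Submodule

section Counting

set_option linter.unusedSectionVars false

lemma aux_card_ne (U : Type*) [AddCommGroup U] [Module F U] [Finite U] :
    Nat.card {u : U // u ≠ 0} + 1 = Fintype.card F ^ finrank F U := by
  classical
  haveI : Fintype U := Fintype.ofFinite U
  have h1 : Fintype.card {u : U // u ≠ 0} = Fintype.card U - 1 := by
    simp [Fintype.card_subtype_compl (fun u : U => u = 0)]
  rw [Nat.card_eq_fintype_card, h1, ← card_eq_pow_finrank (K := F) (V := U)]
  have : 0 < Fintype.card U := Fintype.card_pos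
  omega

lemma card_rank_one_mul (V : Type*) [AddCommGroup V] [Module F V] [Finite V] :
    Nat.card {W : Submodule F V // finrank F W = 1} * (Fintype.card F - 1) + 1
      = Fintype.card F ^ finrank F V := by
  classical
  set S := {W : Submodule F V // finrank F W = 1}
  have g : (Σ W : S, {u : W.1 // u ≠ 0}) ≃ {v : V // v ≠ 0} := by
    refine Equiv.ofBijective (fun p => ⟨p.2.1.1, fun h => p.2.2 (Subtype.ext h)⟩) ⟨?_, ?_⟩
    · rintro ⟨⟨W, hW⟩, ⟨⟨v, hv⟩, hv0⟩⟩ ⟨⟨W', hW'⟩, ⟨⟨v', hv'⟩, hv0'⟩⟩ h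
      simp only [Subtype.mk_eq_mk] at h
      have hvne : v ≠ 0 := fun h0 => hv0 (Subtype.ext h0)
      have hWeq : W = W' := by
        have e1 : W = Submodule.span F {v} := by
          refine (Submodule.eq_of_le_of_finrank_le (Submodule.span_le.2 (by simpa using hv)) ?_).symm
          rw [finrank_span_singleton hvne, hW]
        have e2 : W' = Submodule.span F {v'} := by
          refine (Submodule.eq_of_le_of_finrank_le (Submodule.span_le.2 (by simpa using hv')) ?_).symm
          rw [finrank_span_singleton (fun h0 => hv0' (Subtype.ext h0)), hW']
        rw [e1, e2, h]
      subst hWeq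
      subst h
      rfl
    · rintro ⟨v, hv⟩
      refine ⟨⟨⟨Submodule.span F {v}, finrank_span_singleton hv⟩,
        ⟨⟨v, Submodule.mem_span_singleton_self v⟩, fun h => hv (congrArg Subtype.val h)⟩⟩, rfl⟩
  have hfib : ∀ W : S, Nat.card {u : W.1 // u ≠ 0} = Fintype.card F - 1 := by
    intro W
    have := aux_card_ne (F := F) W.1
    rw [W.2, pow_one] at this
    omega
  have e2 : (Σ W : S, {u : W.1 // u ≠ 0}) ≃ S × Fin (Fintype.card F - 1) :=
    (Equiv.sigmaCongrRight fun W => Finite.equivFinOfCardEq (hfib W)).trans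
      (Equiv.sigmaEquivProd _ _)
  have := aux_card_ne (F := F) V
  rw [← this, ← Nat.card_congr g, Nat.card_congr e2, Nat.card_prod]
  simp

lemma card_rank_one_of_finrank (V : Type*) [AddCommGroup V] [Module F V] [Finite V]
    {n t : ℕ} (hn : finrank F V = n)
    (ht : t * (Fintype.card F - 1) + 1 = Fintype.card F ^ n) :
    Nat.card {W : Submodule F V // finrank F W = 1} = t := by
  have h := card_rank_one_mul (F := F) V
  rw [hn, ← ht] at h
  have hq : 1 < Fintype.card F := Fintype.one_lt_card
  have hk : 0 < Fintype.card F - 1 := by omega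
  exact Nat.eq_of_mul_eq_mul_right hk (by omega)

lemma card_rank_one_dim2 (V : Type*) [AddCommGroup V] [Module F V] [Finite V]
    (hn : finrank F V = 2) :
    Nat.card {W : Submodule F V // finrank F W = 1} = Fintype.card F + 1 := by
  refine card_rank_one_of_finrank V hn ?_
  have hq : 1 < Fintype.card F := Fintype.one_lt_card
  obtain ⟨k, hk⟩ : ∃ k, Fintype.card F = k + 1 := ⟨Fintype.card F - 1, by omega⟩
  rw [hk]; simp; ring

lemma card_rank_one_dim3 (V : Type*) [AddCommGroup V] [Module F V] [Finite V]
    (hn : finrank F V = 3) :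
    Nat.card {W : Submodule F V // finrank F W = 1}
      = Fintype.card F ^ 2 + Fintype.card F + 1 := by
  refine card_rank_one_of_finrank V hn ?_
  have hq : 1 < Fintype.card F := Fintype.one_lt_card
  obtain ⟨k, hk⟩ : ∃ k, Fintype.card F = k + 1 := ⟨Fintype.card F - 1, by omega⟩
  rw [hk]; simp; ring

variable {V : Type*} [AddCommGroup V] [Module F V] [FiniteDimensional F V]

lemma finrank_comap_mkQ (x : Submodule F V) (W : Submodule F (V ⧸ x)) :
    finrank F (comap x.mkQ W) = finrank F W + finrank F x := by
  classical
  set p := comap x.mkQ W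
  have hx : x ≤ p := by
    intro v hv
    simp only [p, mem_comap, mkQ_apply]
    rw [Quotient.mk_eq_zero x |>.2 hv]
    exact W.zero_mem
  let g : p →ₗ[F] V ⧸ x := x.mkQ.comp p.subtype
  have hker : LinearMap.ker g = comap p.subtype x := by
    rw [LinearMap.ker_comp, ker_mkQ]
  have hrange : LinearMap.range g = W := by
    rw [LinearMap.range_comp, range_subtype]
    exact Submodule.map_comap_eq_self (by rw [range_mkQ]; exact le_top)
  have h := LinearMap.finrank_range_add_finrank_ker g
  rw [hker, hrange] at h
  have h2 : finrank F (comap p.subtype x) = finrank F x :=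
    (Submodule.comapSubtypeEquivOfLe hx).finrank_eq
  rw [h2] at h
  exact h.symm

lemma card_succ_above (x : Submodule F V) :
    Nat.card {l : Submodule F V // finrank F l = finrank F x + 1 ∧ x ≤ l}
      = Nat.card {W : Submodule F (V ⧸ x) // finrank F W = 1} := by
  refine (Nat.card_congr ?_).symm
  have e1 := (comapMkQRelIso x).toEquiv.subtypeEquiv
      (p := fun W : Submodule F (V ⧸ x) => finrank F W = 1)
      (q := fun y : {p' : Submodule F V // x ≤ p'} => finrank F y.1 = finrank F x + 1)
      (fun W => by
        constructor
        · intro h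
          show finrank F (comap x.mkQ W) = _
          rw [finrank_comap_mkQ x W, h]
          omega
        · intro h
          have h2 : finrank F (comap x.mkQ W) = finrank F x + 1 := h
          rw [finrank_comap_mkQ x W] at h2
          omega)
  exact e1.trans ((Equiv.subtypeSubtypeEquivSubtypeInter
      (fun p' : Submodule F V => x ≤ p')
      (fun l => finrank F l = finrank F x + 1)).trans
      (Equiv.subtypeEquivRight (fun l => and_comm)))

lemma card_pt_below (l : Submodule F V) :
    Nat.card {P : Submodule F V // finrank F P = 1 ∧ P ≤ l}
      = Nat.card {W : Submodule F l // finrank F W = 1} := by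
  refine (Nat.card_congr ?_).symm
  have e1 := (MapSubtype.orderIso l).toEquiv.subtypeEquiv
      (p := fun W : Submodule F l => finrank F W = 1)
      (q := fun y : {p' : Submodule F V // p' ≤ l} => finrank F y.1 = 1)
      (fun W => by
        constructor
        · intro h
          show finrank F (map l.subtype W) = 1
          rw [Submodule.finrank_map_subtype_eq, h]
        · intro h
          have h2 : finrank F (map l.subtype W) = 1 := h
          rwa [Submodule.finrank_map_subtype_eq] at h2)
  exact e1.trans ((Equiv.subtypeSubtypeEquivSubtypeInter
      (fun p' : Submodule F V => p' ≤ l)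
      (fun P => finrank F P = 1)).trans
      (Equiv.subtypeEquivRight (fun P => and_comm)))

end Counting

/-! ### Duality -/

section Duality

set_option linter.unusedSectionVars false

noncomputable def Dual4 : Module.Dual F (Fin 4 → F) ≃ₗ[F] (Fin 4 → F) :=
  (Pi.basisFun F (Fin 4)).toDualEquiv.symm

noncomputable def Dm : SubPG F ≃o (SubPG F)ᵒᵈ :=
  (Subspace.orderIsoFiniteDimensional (K := F) (V := Fin 4 → F)).trans
    (Submodule.orderIsoMapComap (Dual4 (F := F))).dual

noncomputable def E : SubPG F ≃ SubPG F := (Dm (F := F)).toEquiv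

lemma E_le_E {W W' : SubPG F} : E W ≤ E W' ↔ W' ≤ W :=
  ⟨fun h => (Dm (F := F)).le_iff_le.mp h, fun h => (Dm (F := F)).le_iff_le.mpr h⟩

lemma finrank_E (W : SubPG F) : finrank F (E W) + finrank F W = 4 := by
  have h1 : (E W : SubPG F)
      = (W.dualAnnihilator).map
        (Dual4 (F := F) : Module.Dual F (Fin 4 → F) →ₗ[F] (Fin 4 → F)) := rfl
  rw [h1, LinearEquiv.finrank_map_eq (Dual4 (F := F)) W.dualAnnihilator]
  have h2 : finrank F W.dualAnnihilator = finrank F ((Fin 4 → F) ⧸ W) :=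
    (Subspace.quotEquivAnnihilator W).symm.finrank_eq
  rw [h2]
  have := Submodule.finrank_quotient_add_finrank W
  have h4 : finrank F (Fin 4 → F) = 4 := Module.finrank_fin_fun F
  omega

noncomputable def Phi : (SubPG F × SubPG F × SubPG F) ≃ (SubPG F × SubPG F × SubPG F) where
  toFun c := (E c.2.2, E c.2.1, E c.1)
  invFun c := (E.symm c.2.2, E.symm c.2.1, E.symm c.1)
  left_inv c := by simp
  right_inv c := by simp

lemma mem_FF_Phi (x : SubPG F) (c : SubPG F × SubPG F × SubPG F) :
    c ∈ FF x ↔ Phi c ∈ FF (E x) := by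
  obtain ⟨P, l, π⟩ := c
  have fP := finrank_E (F := F) P
  have fl := finrank_E (F := F) l
  have fπ := finrank_E (F := F) π
  simp only [FF, Phi, IsChamber, IsPt, IsLn, IsPl, LineIncid, Set.mem_setOf_eq,
    Equiv.coe_fn_mk] at *
  constructor
  · rintro ⟨⟨h1, h2, h3, h4, h5⟩, h6⟩
    refine ⟨⟨by omega, by omega, by omega, E_le_E.mpr h5, E_le_E.mpr h4⟩, ?_⟩
    rcases h6 with h | h
    · exact Or.inr (E_le_E.mpr h)
    · exact Or.inl (E_le_E.mpr h)
  · rintro ⟨⟨h1, h2, h3, h4, h5⟩, h6⟩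
    refine ⟨⟨by omega, by omega, by omega, E_le_E.mp h5, E_le_E.mp h4⟩, ?_⟩
    rcases h6 with h | h
    · exact Or.inr (E_le_E.mp h)
    · exact Or.inl (E_le_E.mp h)

lemma FF_E_eq_image (x : SubPG F) : FF (E x) = Phi '' (FF x) := by
  ext z
  constructor
  · intro hz
    refine ⟨Phi.symm z, ?_, Phi.apply_symm_apply z⟩
    rw [mem_FF_Phi x (Phi.symm z), Phi.apply_symm_apply]
    exact hz
  · rintro ⟨c, hc, rfl⟩
    exact (mem_FF_Phi x c).mp hc

end Duality

/-! ### The count for a point -/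

section Main

set_option linter.unusedSectionVars false

instance : Finite (SubPG F) :=
  Finite.of_injective (fun W : SubPG F => (W : Set (Fin 4 → F))) SetLike.coe_injective

instance (V : Type*) [AddCommGroup V] [Module F V] [Finite V] : Finite (Submodule F V) :=
  Finite.of_injective (fun W : Submodule F V => (W : Set V)) SetLike.coe_injective

lemma finrank4 : finrank F (Fin 4 → F) = 4 := Module.finrank_fin_fun F

lemma card_FF_pt (x : SubPG F) (hx : IsPt x) :
    Nat.card (FF x) = (Fintype.card F ^ 2 + Fintype.card F + 1) * (Fintype.card F + 1) ^ 2 := by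
  classical
  have h4 : finrank F (Fin 4 → F) = 4 := finrank4
  have hxl : ∀ c ∈ FF x, x ≤ c.2.1 := by
    rintro c ⟨⟨_, hln, _, _, _⟩, hinc⟩
    rcases hinc with h | h
    · exact h
    · exfalso
      have := Submodule.finrank_mono h
      rw [hln, hx] at this
      omega
  -- the sigma decomposition
  set L := {l : SubPG F // IsLn l ∧ x ≤ l}
  have e : ↥(FF x) ≃ Σ l : L,
      ({P : SubPG F // IsPt P ∧ P ≤ l.1} × {π : SubPG F // IsPl π ∧ l.1 ≤ π}) := by
    refine ⟨fun c => ⟨⟨c.1.2.1, c.2.1.2.1, hxl c.1 c.2⟩,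
      ⟨c.1.1, c.2.1.1, c.2.1.2.2.2.1⟩, ⟨c.1.2.2, c.2.1.2.2.1, c.2.1.2.2.2.2⟩⟩,
      fun p => ⟨(p.2.1.1, p.1.1, p.2.2.1),
        ⟨⟨p.2.1.2.1, p.1.2.1, p.2.2.2.1, p.2.1.2.2, p.2.2.2.2⟩, Or.inl p.1.2.2⟩⟩, ?_, ?_⟩
    · rintro ⟨⟨P, l, π⟩, h⟩; rfl
    · rintro ⟨⟨l, hl⟩, ⟨P, hP⟩, ⟨π, hπ⟩⟩; rfl
  rw [Nat.card_congr e]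
  -- card of points on l and planes over l
  have hPcard : ∀ l : L, Nat.card {P : SubPG F // IsPt P ∧ P ≤ l.1} = Fintype.card F + 1 := by
    intro l
    have h1 : Nat.card {P : SubPG F // IsPt P ∧ P ≤ l.1}
        = Nat.card {W : Submodule F l.1 // finrank F W = 1} := card_pt_below l.1
    rw [h1]
    exact card_rank_one_dim2 _ l.2.1
  have hπcard : ∀ l : L, Nat.card {π : SubPG F // IsPl π ∧ l.1 ≤ π} = Fintype.card F + 1 := by
    intro l
    have hiff : ∀ π : SubPG F, (IsPl π ∧ l.1 ≤ π) ↔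
        (finrank F π = finrank F l.1 + 1 ∧ l.1 ≤ π) := by
      intro π
      rw [IsPl, l.2.1]
    have h1 : Nat.card {π : SubPG F // IsPl π ∧ l.1 ≤ π}
        = Nat.card {π : SubPG F // finrank F π = finrank F l.1 + 1 ∧ l.1 ≤ π} :=
      Nat.card_congr (Equiv.subtypeEquivRight hiff)
    rw [h1, card_succ_above l.1]
    refine card_rank_one_dim2 _ ?_
    have := Submodule.finrank_quotient_add_finrank l.1
    have h2 : finrank F l.1 = 2 := l.2.1
    omega
  have hLcard : Nat.card L = Fintype.card F ^ 2 + Fintype.card F + 1 := by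
    have hiff : ∀ l : SubPG F, (IsLn l ∧ x ≤ l) ↔
        (finrank F l = finrank F x + 1 ∧ x ≤ l) := by
      intro l
      rw [IsLn, hx]
    have h1 : Nat.card L
        = Nat.card {l : SubPG F // finrank F l = finrank F x + 1 ∧ x ≤ l} :=
      Nat.card_congr (Equiv.subtypeEquivRight hiff)
    rw [h1, card_succ_above x]
    refine card_rank_one_dim3 _ ?_
    have := Submodule.finrank_quotient_add_finrank x
    rw [hx, h4] at this
    omega
  have e2 : (Σ l : L,
      ({P : SubPG F // IsPt P ∧ P ≤ l.1} × {π : SubPG F // IsPl π ∧ l.1 ≤ π}))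
      ≃ L × (Fin (Fintype.card F + 1) × Fin (Fintype.card F + 1)) :=
    (Equiv.sigmaCongrRight fun l => Equiv.prodCongr
      (Finite.equivFinOfCardEq (hPcard l)) (Finite.equivFinOfCardEq (hπcard l))).trans
      (Equiv.sigmaEquivProd _ _)
  rw [Nat.card_congr e2, Nat.card_prod, Nat.card_prod, hLcard]
  simp
  ring

end Main

theorem FF_card_and_nonOpp (q : ℕ) (hq : Fintype.card F = q)
    (x : SubPG F) (hx : IsPt x ∨ IsPl x) :
    (FF x).ncard = (q ^ 2 + q + 1) * (q + 1) ^ 2 ∧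
    ∀ c ∈ FF x, ∀ c' ∈ FF x, ¬ Opp c c' := by
  classical
  subst hq
  constructor
  · rw [← Nat.card_coe_set_eq]
    rcases hx with hx | hx
    · exact card_FF_pt x hx
    · have hEx : IsPt (E x) := by
        have := finrank_E (F := F) x
        rw [IsPl] at hx
        rw [IsPt]
        omega
      have himg := FF_E_eq_image (F := F) x
      have : Nat.card (FF (E x)) = Nat.card (FF x) := by
        rw [himg, Nat.card_coe_set_eq, Nat.card_coe_set_eq,
          Set.ncard_image_of_injective _ Phi.injective]
      rw [← this]
      exact card_FF_pt (E x) hEx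
  · rintro c hc c' hc' ⟨_, hinf, _⟩
    obtain ⟨⟨_, hln, _, _, _⟩, hi⟩ := hc
    obtain ⟨⟨_, hln', _, _, _⟩, hi'⟩ := hc'
    rcases hx with hx | hx
    · have hle : x ≤ c.2.1 := by
        rcases hi with h | h
        · exact h
        · have := Submodule.finrank_mono h
          rw [hln, hx] at this; omega
      have hle' : x ≤ c'.2.1 := by
        rcases hi' with h | h
        · exact h
        · have := Submodule.finrank_mono h
          rw [hln', hx] at this; omega
      have : x ≤ ⊥ := hinf ▸ le_inf hle hle'
      have hxbot : x = ⊥ := le_bot_iff.mp this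
      rw [IsPt, hxbot, finrank_bot] at hx
      omega
    · have hle : c.2.1 ≤ x := by
        rcases hi with h | h
        · have := Submodule.finrank_mono h
          rw [hln, hx] at this; omega
        · exact h
      have hle' : c'.2.1 ≤ x := by
        rcases hi' with h | h
        · have := Submodule.finrank_mono h
          rw [hln', hx] at this; omega
        · exact h
      have hsum := Submodule.finrank_sup_add_finrank_inf_eq c.2.1 c'.2.1
      rw [hinf, finrank_bot, hln, hln'] at hsum
      have hsup : c.2.1 ⊔ c'.2.1 ≤ x := sup_le hle hle'
      have := Submodule.finrank_mono hsup
      rw [hx] at this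
      omega
end

section
/- Let X be a maximal set of pairwise non-opposite chambers of PG(3,q), and let R be a point or a plane with X ≠ F(R). Then |X ∩ F(R)| <= (q+1)^3 + q^2(2q+1). -/
open Module

variable (F : Type*) [Field F] [Fintype F]

variable {F}

set_option linter.unusedSectionVars false
set_option maxHeartbeats 1000000

namespace PGaux

instance : Finite (SubPG F) :=
  Finite.of_injective (fun W => (W : Set (Fin 4 → F))) SetLike.coe_injective

lemma finrank_V : finrank F (Fin 4 → F) = 4 := Module.finrank_fin_fun F

lemma rank_le_four (W : SubPG F) : finrank F W ≤ 4 := by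
  have := Submodule.finrank_le W
  rwa [finrank_V] at this

lemma exists_mem_not_mem (U W : SubPG F) (h : U ≤ W) (h2 : finrank F U < finrank F W) :
    ∃ v ∈ W, v ∉ U := by
  have hne : U ≠ W := by rintro rfl; exact lt_irrefl _ h2
  obtain ⟨v, hv, hv2⟩ := SetLike.exists_of_lt (lt_of_le_of_ne h hne)
  exact ⟨v, hv, hv2⟩

lemma inf_span_eq_bot (U : SubPG F) (v : Fin 4 → F) (hv : v ∉ U) : U ⊓ (F ∙ v) = ⊥ := by
  rw [eq_bot_iff]
  rintro x ⟨hxU, hxs⟩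
  obtain ⟨c, rfl⟩ := Submodule.mem_span_singleton.mp hxs
  rcases eq_or_ne c 0 with rfl | hc
  · simp
  · have key := U.smul_mem c⁻¹ hxU
    exact absurd (by rw [smul_smul, inv_mul_cancel₀ hc, one_smul] at key; exact key) hv

lemma finrank_sup_span (U : SubPG F) (v : Fin 4 → F) (hv : v ∉ U) :
    finrank F ↥(U ⊔ F ∙ v) = finrank F U + 1 := by
  have h0 : v ≠ 0 := fun h => hv (h ▸ U.zero_mem)
  have := Submodule.finrank_sup_add_finrank_inf_eq U (F ∙ v)
  rw [inf_span_eq_bot U v hv] at this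
  simp only [finrank_bot, add_zero, finrank_span_singleton h0] at this
  omega

lemma pt_ne_bot {P : SubPG F} (hP : IsPt P) : P ≠ ⊥ := by
  intro h; rw [h] at hP; unfold IsPt at hP; rw [finrank_bot] at hP; omega

lemma rank_pos_of_ne_bot {P : SubPG F} (h : P ≠ ⊥) : 1 ≤ finrank F P := by
  rcases Nat.eq_zero_or_pos (finrank F P) with h0 | h1
  · exact absurd (Submodule.finrank_eq_zero.mp h0) h
  · exact h1

lemma pt_le_eq {P Q : SubPG F} (hP : IsPt P) (hQ : IsPt Q) (h : P ≤ Q) : P = Q := by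
  have hP' : finrank F ↥P = 1 := hP
  have hQ' : finrank F ↥Q = 1 := hQ
  exact Submodule.eq_of_le_of_finrank_le h (by omega)

lemma pt_eq_of_mem {P P' : SubPG F} (hP : IsPt P) (hP' : IsPt P') {v : Fin 4 → F}
    (hv : v ≠ 0) (h1 : v ∈ P) (h2 : v ∈ P') : P = P' := by
  have e1 : (F ∙ v) = P :=
    Submodule.eq_of_le_of_finrank_le ((Submodule.span_singleton_le_iff_mem v P).mpr h1)
      (by rw [finrank_span_singleton hv]; exact le_of_eq hP)
  have e2 : (F ∙ v) = P' :=
    Submodule.eq_of_le_of_finrank_le ((Submodule.span_singleton_le_iff_mem v P').mpr h2)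
      (by rw [finrank_span_singleton hv]; exact le_of_eq hP')
  rw [← e1, e2]

lemma pt_inf_eq_bot {P U : SubPG F} (hP : IsPt P) (h : ¬ P ≤ U) : P ⊓ U = ⊥ := by
  by_contra hne
  have h1 : 1 ≤ finrank F ↥(P ⊓ U) := rank_pos_of_ne_bot hne
  have hP' : finrank F ↥P = 1 := hP
  have h2 : P ⊓ U = P :=
    Submodule.eq_of_le_of_finrank_le (inf_le_left : P ⊓ U ≤ P) (by omega)
  exact h (h2 ▸ (inf_le_right : P ⊓ U ≤ U))

/-- The set of points of `W` not in `U` has at most `q ^ finrank U` elements. -/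
lemma count_pts_off (U W : SubPG F) (hUW : U ≤ W) (hd : finrank F W = finrank F U + 1) :
    {P : SubPG F | IsPt P ∧ P ≤ W ∧ ¬ P ≤ U}.ncard ≤ Fintype.card F ^ finrank F U := by
  classical
  obtain ⟨v, hvW, hvU⟩ := exists_mem_not_mem U W hUW (by omega)
  have hWeq : U ⊔ (F ∙ v) = W := by
    apply Submodule.eq_of_le_of_finrank_le
      (sup_le hUW ((Submodule.span_singleton_le_iff_mem v W).mpr hvW))
    rw [finrank_sup_span U v hvU, hd]
  have hex : ∀ P ∈ {P : SubPG F | IsPt P ∧ P ≤ W ∧ ¬ P ≤ U},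
      ∃ u, u ∈ (U : Set (Fin 4 → F)) ∧ u + v ∈ P := by
    rintro P ⟨hPpt, hPW, hPU⟩
    obtain ⟨p, hpP, hpU⟩ := SetLike.not_le_iff_exists.mp hPU
    have hpW : p ∈ U ⊔ (F ∙ v) := hWeq ▸ hPW hpP
    obtain ⟨u', hu', s, hs, rfl⟩ := Submodule.mem_sup.mp hpW
    obtain ⟨cc, rfl⟩ := Submodule.mem_span_singleton.mp hs
    have hc : cc ≠ 0 := by rintro rfl; simp at hpU; exact hpU hu'
    refine ⟨cc⁻¹ • u', U.smul_mem _ hu', ?_⟩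
    have : cc⁻¹ • u' + v = cc⁻¹ • (u' + cc • v) := by
      rw [smul_add, smul_smul, inv_mul_cancel₀ hc, one_smul]
    rw [this]
    exact P.smul_mem _ hpP
  set f : SubPG F → (Fin 4 → F) := fun P =>
    if h : ∃ u, u ∈ (U : Set (Fin 4 → F)) ∧ u + v ∈ P then h.choose else 0 with hf
  have hmaps : ∀ P ∈ {P : SubPG F | IsPt P ∧ P ≤ W ∧ ¬ P ≤ U}, f P ∈ (U : Set (Fin 4 → F)) := by
    intro P hP
    have h := hex P hP
    simp only [hf, dif_pos h]
    exact h.choose_spec.1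
  have hspec : ∀ P ∈ {P : SubPG F | IsPt P ∧ P ≤ W ∧ ¬ P ≤ U}, f P + v ∈ P := by
    intro P hP
    have h := hex P hP
    simp only [hf, dif_pos h]
    exact h.choose_spec.2
  have hinj : Set.InjOn f {P : SubPG F | IsPt P ∧ P ≤ W ∧ ¬ P ≤ U} := by
    intro P hP P' hP' hfe
    have h1 := hspec P hP
    have h2 := hspec P' hP'
    rw [hfe] at h1
    have hne : f P' + v ≠ 0 := by
      intro h0
      have : v = -(f P') := by linear_combination (norm := abel) h0
      have : v ∈ U := this ▸ U.neg_mem (hmaps P' hP')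
      exact hvU this
    exact pt_eq_of_mem hP.1 hP'.1 hne h1 h2
  calc {P : SubPG F | IsPt P ∧ P ≤ W ∧ ¬ P ≤ U}.ncard
      ≤ (U : Set (Fin 4 → F)).ncard :=
        Set.ncard_le_ncard_of_injOn f hmaps hinj (Set.toFinite _)
    _ = Fintype.card F ^ finrank F U := by
        have : Fintype ↥U := Fintype.ofFinite _
        rw [← Nat.card_coe_set_eq, SetLike.coe_sort_coe, Nat.card_eq_fintype_card]
        exact Module.card_eq_pow_finrank

lemma count_pts_line (W : SubPG F) (hW : IsLn W) :
    {P : SubPG F | IsPt P ∧ P ≤ W}.ncard ≤ Fintype.card F + 1 := by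
  obtain ⟨v, hvW, hv0⟩ := exists_mem_not_mem ⊥ W bot_le (by rw [finrank_bot, hW]; omega)
  rw [Submodule.mem_bot] at hv0
  set U₁ : SubPG F := F ∙ v with hU₁
  have hU₁W : U₁ ≤ W := (Submodule.span_singleton_le_iff_mem v W).mpr hvW
  have hU₁pt : IsPt U₁ := finrank_span_singleton hv0
  have hU₁pt' : finrank F ↥U₁ = 1 := hU₁pt
  have hW' : finrank F ↥W = 2 := hW
  have hsub : {P : SubPG F | IsPt P ∧ P ≤ W} ⊆
      insert U₁ {P : SubPG F | IsPt P ∧ P ≤ W ∧ ¬ P ≤ U₁} := by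
    rintro P ⟨hPpt, hPW⟩
    by_cases h : P ≤ U₁
    · exact Or.inl (pt_le_eq hPpt hU₁pt h)
    · exact Or.inr ⟨hPpt, hPW, h⟩
  calc {P : SubPG F | IsPt P ∧ P ≤ W}.ncard
      ≤ (insert U₁ {P : SubPG F | IsPt P ∧ P ≤ W ∧ ¬ P ≤ U₁}).ncard :=
        Set.ncard_le_ncard hsub (Set.toFinite _)
    _ ≤ {P : SubPG F | IsPt P ∧ P ≤ W ∧ ¬ P ≤ U₁}.ncard + 1 := Set.ncard_insert_le _ _
    _ ≤ Fintype.card F + 1 := by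
        have := count_pts_off U₁ W hU₁W (by omega)
        rw [hU₁pt', pow_one] at this
        omega

lemma exists_compl2 (A B : SubPG F) (hAB : A ≤ B) (hd : finrank F B = finrank F A + 2) :
    ∃ m : SubPG F, IsLn m ∧ A ⊓ m = ⊥ ∧ A ⊔ m = B := by
  obtain ⟨v₁, hv₁B, hv₁A⟩ := exists_mem_not_mem A B hAB (by omega)
  set A₁ := A ⊔ (F ∙ v₁) with hA₁
  have hA₁B : A₁ ≤ B := sup_le hAB ((Submodule.span_singleton_le_iff_mem v₁ B).mpr hv₁B)
  have hA₁r : finrank F A₁ = finrank F A + 1 := finrank_sup_span A v₁ hv₁A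
  obtain ⟨v₂, hv₂B, hv₂A₁⟩ := exists_mem_not_mem A₁ B hA₁B (by omega)
  set m : SubPG F := (F ∙ v₁) ⊔ (F ∙ v₂) with hmdef
  have hsup : A ⊔ m = B := by
    have h1 : A ⊔ m = A₁ ⊔ (F ∙ v₂) := by rw [hmdef, hA₁, sup_assoc]
    rw [h1]
    apply Submodule.eq_of_le_of_finrank_le
      (sup_le hA₁B ((Submodule.span_singleton_le_iff_mem v₂ B).mpr hv₂B))
    rw [finrank_sup_span A₁ v₂ hv₂A₁, hd, hA₁r]
  have hbot : A ⊓ m = ⊥ := by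
    rw [eq_bot_iff]
    rintro x ⟨hxA, hxm⟩
    obtain ⟨s₁, hs₁, s₂, hs₂, rfl⟩ := Submodule.mem_sup.mp hxm
    obtain ⟨c₁, rfl⟩ := Submodule.mem_span_singleton.mp hs₁
    obtain ⟨c₂, rfl⟩ := Submodule.mem_span_singleton.mp hs₂
    rcases eq_or_ne c₂ 0 with rfl | hc₂
    · simp only [zero_smul, add_zero] at hxA ⊢
      rcases eq_or_ne c₁ 0 with rfl | hc₁
      · simp
      · have key := A.smul_mem c₁⁻¹ hxA
        rw [smul_smul, inv_mul_cancel₀ hc₁, one_smul] at key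
        exact absurd key hv₁A
    · exfalso
      have h1 : c₁ • v₁ + c₂ • v₂ ∈ A₁ := hA₁ ▸ Submodule.mem_sup_left hxA
      have h2 : c₁ • v₁ ∈ A₁ := by
        apply Submodule.mem_sup_right
        exact Submodule.mem_span_singleton.mpr ⟨c₁, rfl⟩
      have h3 : c₂ • v₂ ∈ A₁ := by
        have := A₁.sub_mem h1 h2
        simpa using this
      have key := A₁.smul_mem c₂⁻¹ h3
      rw [smul_smul, inv_mul_cancel₀ hc₂, one_smul] at key
      exact hv₂A₁ key
  have hrank : IsLn m := by
    have := Submodule.finrank_sup_add_finrank_inf_eq A m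
    rw [hsup, hbot, finrank_bot, hd] at this
    show finrank F ↥m = 2
    omega
  exact ⟨m, hrank, hbot, hsup⟩

lemma count_between (A B : SubPG F) (hAB : A ≤ B) (hd : finrank F B = finrank F A + 2) :
    {W : SubPG F | A ≤ W ∧ W ≤ B ∧ finrank F W = finrank F A + 1}.ncard
      ≤ Fintype.card F + 1 := by
  obtain ⟨m, hm, hAm, hAmB⟩ := exists_compl2 A B hAB hd
  have hm' : finrank F ↥m = 2 := hm
  apply le_trans (Set.ncard_le_ncard_of_injOn (fun W => W ⊓ m) ?_ ?_ (Set.toFinite _))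
    (count_pts_line m hm)
  · rintro W ⟨hAW, hWB, hWr⟩
    have hWm : W ⊔ m = B := by
      apply le_antisymm (sup_le hWB (le_trans le_sup_right (le_of_eq hAmB)))
      rw [← hAmB]
      exact sup_le_sup_right hAW m
    have := Submodule.finrank_sup_add_finrank_inf_eq W m
    rw [hWm, hd, hWr, hm'] at this
    exact ⟨show finrank F ↥(W ⊓ m) = 1 by omega, inf_le_right⟩
  · rintro W ⟨hAW, hWB, hWr⟩ W' ⟨hAW', hWB', hWr'⟩ he
    have key : ∀ W₀ : SubPG F, A ≤ W₀ → W₀ ≤ B → finrank F W₀ = finrank F A + 1 →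
        IsPt (W₀ ⊓ m) → A ⊔ (W₀ ⊓ m) = W₀ := by
      intro W₀ hAW₀ hW₀B hW₀r hpt
      apply Submodule.eq_of_le_of_finrank_le (sup_le hAW₀ inf_le_left)
      have hinf : A ⊓ (W₀ ⊓ m) = ⊥ := by
        rw [eq_bot_iff, ← hAm]
        exact le_inf inf_le_left (le_trans inf_le_right inf_le_right)
      have := Submodule.finrank_sup_add_finrank_inf_eq A (W₀ ⊓ m)
      rw [hinf, finrank_bot, hpt] at this
      omega
    have hpt : IsPt (W ⊓ m) := by
      have hWm : W ⊔ m = B := by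
        apply le_antisymm (sup_le hWB (le_trans le_sup_right (le_of_eq hAmB)))
        rw [← hAmB]; exact sup_le_sup_right hAW m
      have := Submodule.finrank_sup_add_finrank_inf_eq W m
      rw [hWm, hd, hWr, hm'] at this
      unfold IsPt; omega
    have hpt' : IsPt (W' ⊓ m) := by
      have hWm : W' ⊔ m = B := by
        apply le_antisymm (sup_le hWB' (le_trans le_sup_right (le_of_eq hAmB)))
        rw [← hAmB]; exact sup_le_sup_right hAW' m
      have := Submodule.finrank_sup_add_finrank_inf_eq W' m
      rw [hWm, hd, hWr', hm'] at this
      unfold IsPt; omega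
    have he' : W ⊓ m = W' ⊓ m := he
    rw [← key W hAW hWB hWr hpt, ← key W' hAW' hWB' hWr' hpt', he']


lemma fiber_le {α β : Type*} [Finite α] [Finite β] (S : Set α) (T : Set β) (f : α → β)
    (k : ℕ) (h1 : ∀ a ∈ S, f a ∈ T) (h2 : ∀ b ∈ T, {a ∈ S | f a = b}.ncard ≤ k) :
    S.ncard ≤ T.ncard * k := by
  classical
  have hS : S.Finite := Set.toFinite _
  have hT : T.Finite := Set.toFinite _
  rw [Set.ncard_eq_toFinset_card S hS, Set.ncard_eq_toFinset_card T hT]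
  rw [mul_comm]
  apply Finset.card_le_mul_card_image_of_maps_to
    (fun a ha => hT.mem_toFinset.mpr (h1 a (hS.mem_toFinset.mp ha)))
  intro b hb
  have : ({a ∈ hS.toFinset | f a = b} : Finset α) = (hS.toFinset.filter (fun a => f a = b)) := rfl
  have hcoe : (↑(hS.toFinset.filter (fun a => f a = b)) : Set α) = {a ∈ S | f a = b} := by
    ext a; simp [hS.mem_toFinset]
  calc (hS.toFinset.filter (fun a => f a = b)).card
      = (↑(hS.toFinset.filter (fun a => f a = b)) : Set α).ncard := (Set.ncard_coe_finset _).symm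
    _ = {a ∈ S | f a = b}.ncard := by rw [hcoe]
    _ ≤ k := h2 b (hT.mem_toFinset.mp hb)


lemma incid_pt {R l' : SubPG F} (hR : IsPt R) (hl' : IsLn l') (h : LineIncid R l') :
    R ≤ l' := by
  rcases h with h | h
  · exact h
  · exfalso
    have := Submodule.finrank_mono h
    have h1 : finrank F ↥R = 1 := hR
    have h2 : finrank F ↥l' = 2 := hl'
    omega

lemma incid_pl {R l' : SubPG F} (hR : IsPl R) (hl' : IsLn l') (h : LineIncid R l') :
    l' ≤ R := by
  rcases h with h | h
  · exfalso
    have := Submodule.finrank_mono h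
    have h1 : finrank F ↥R = 3 := hR
    have h2 : finrank F ↥l' = 2 := hl'
    omega
  · exact h

lemma count_meet_pt (R l : SubPG F) (hR : IsPt R) (hl : IsLn l) (hinc : ¬ LineIncid R l) :
    {l' : SubPG F | IsLn l' ∧ LineIncid R l' ∧ l ⊓ l' ≠ ⊥}.ncard ≤ Fintype.card F + 1 := by
  have hR' : finrank F ↥R = 1 := hR
  have hl2 : finrank F ↥l = 2 := hl
  have hRl : ¬ R ≤ l := fun h => hinc (Or.inl h)
  have hRinf : R ⊓ l = ⊥ := pt_inf_eq_bot hR hRl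
  have hE : finrank F ↥(R ⊔ l) = 3 := by
    have := Submodule.finrank_sup_add_finrank_inf_eq R l
    rw [hRinf, finrank_bot] at this; omega
  refine le_trans (Set.ncard_le_ncard ?_ (Set.toFinite _))
    (le_trans (Set.ncard_le_ncard (le_refl _) (Set.toFinite _))
      (count_between R (R ⊔ l) le_sup_left (by omega)))
  rintro l'' ⟨h1, h2, h3⟩
  have h1' : finrank F ↥l'' = 2 := h1
  have hRle : R ≤ l'' := incid_pt hR h1 h2
  have hQpos : 1 ≤ finrank F ↥(l ⊓ l'') := rank_pos_of_ne_bot h3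
  have hQ2 : finrank F ↥(l ⊓ l'') ≤ 2 := by
    have := Submodule.finrank_mono (inf_le_left : l ⊓ l'' ≤ l); omega
  have hQ1 : finrank F ↥(l ⊓ l'') = 1 := by
    by_contra hne
    have heq : l ⊓ l'' = l :=
      Submodule.eq_of_le_of_finrank_le (inf_le_left : l ⊓ l'' ≤ l) (by omega)
    have hle : l ≤ l'' := heq ▸ (inf_le_right : l ⊓ l'' ≤ l'')
    have : l = l'' := Submodule.eq_of_le_of_finrank_le hle (by omega)
    exact hRl (this ▸ hRle)
  have hRQ : R ⊓ (l ⊓ l'') = ⊥ :=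
    pt_inf_eq_bot hR (fun hh => hRl (le_trans hh inf_le_left))
  have hsupQ : finrank F ↥(R ⊔ (l ⊓ l'')) = 2 := by
    have := Submodule.finrank_sup_add_finrank_inf_eq R (l ⊓ l'')
    rw [hRQ, finrank_bot] at this; omega
  have hkey : R ⊔ (l ⊓ l'') = l'' :=
    Submodule.eq_of_le_of_finrank_le (sup_le hRle inf_le_right) (by omega)
  refine ⟨hRle, ?_, by omega⟩
  rw [← hkey]
  exact sup_le le_sup_left (le_trans inf_le_left le_sup_right)

lemma count_meet_pl (R l : SubPG F) (hR : IsPl R) (hl : IsLn l) (hinc : ¬ LineIncid R l) :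
    {l' : SubPG F | IsLn l' ∧ LineIncid R l' ∧ l ⊓ l' ≠ ⊥}.ncard ≤ Fintype.card F + 1 := by
  have hR' : finrank F ↥R = 3 := hR
  have hl2 : finrank F ↥l = 2 := hl
  have hlR : ¬ l ≤ R := fun h => hinc (Or.inr h)
  have hsup4 : finrank F ↥(l ⊔ R) = 4 := by
    have hlt : R < l ⊔ R := lt_of_le_of_ne le_sup_right
      (fun h => hlR (h ▸ (le_sup_left : l ≤ l ⊔ R)))
    have := Submodule.finrank_lt_finrank_of_lt hlt
    have := rank_le_four (l ⊔ R)
    omega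
  have hT : finrank F ↥(l ⊓ R) = 1 := by
    have := Submodule.finrank_sup_add_finrank_inf_eq l R
    rw [hsup4] at this; omega
  refine le_trans (Set.ncard_le_ncard ?_ (Set.toFinite _))
    (count_between (l ⊓ R) R inf_le_right (by omega))
  rintro l'' ⟨h1, h2, h3⟩
  have h1' : finrank F ↥l'' = 2 := h1
  have hl''R : l'' ≤ R := incid_pl hR h1 h2
  have hQle : l ⊓ l'' ≤ l ⊓ R := le_inf inf_le_left (le_trans inf_le_right hl''R)
  have hQpos : 1 ≤ finrank F ↥(l ⊓ l'') := rank_pos_of_ne_bot h3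
  have hkey : l ⊓ l'' = l ⊓ R :=
    Submodule.eq_of_le_of_finrank_le hQle (by omega)
  exact ⟨hkey ▸ (inf_le_right : l ⊓ l'' ≤ l''), hl''R, by omega⟩

lemma count_skew_pt (R l : SubPG F) (hR : IsPt R) (hl : IsLn l) (hinc : ¬ LineIncid R l) :
    {l' : SubPG F | IsLn l' ∧ LineIncid R l' ∧ l ⊓ l' = ⊥}.ncard ≤ Fintype.card F ^ 2 := by
  have hR' : finrank F ↥R = 1 := hR
  have hl2 : finrank F ↥l = 2 := hl
  have hRl : ¬ R ≤ l := fun h => hinc (Or.inl h)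
  have hRinf : R ⊓ l = ⊥ := pt_inf_eq_bot hR hRl
  have hE : finrank F ↥(R ⊔ l) = 3 := by
    have := Submodule.finrank_sup_add_finrank_inf_eq R l
    rw [hRinf, finrank_bot] at this; omega
  have htop : finrank F ↥(⊤ : SubPG F) = 4 := by rw [finrank_top, finrank_V]
  obtain ⟨v, -, hv⟩ := exists_mem_not_mem (R ⊔ l) ⊤ le_top (by omega)
  have hvl : v ∉ l := fun h => hv ((le_sup_right : l ≤ R ⊔ l) h)
  set π₁ : SubPG F := l ⊔ (F ∙ v) with hπ₁def
  have hπ₁r : finrank F ↥π₁ = 3 := by rw [hπ₁def, finrank_sup_span l v hvl, hl2]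
  have hRπ₁ : ¬ R ≤ π₁ := by
    intro h
    have h1 : R ⊔ l ≤ π₁ := sup_le h le_sup_left
    have h2 : R ⊔ l = π₁ := Submodule.eq_of_le_of_finrank_le h1 (by omega)
    exact hv (h2 ▸ ((le_sup_right : (F ∙ v) ≤ π₁) (Submodule.mem_span_singleton_self v)))
  have hfact : ∀ l'' ∈ {l' : SubPG F | IsLn l' ∧ LineIncid R l' ∧ l ⊓ l' = ⊥},
      IsPt (l'' ⊓ π₁) ∧ R ⊔ (l'' ⊓ π₁) = l'' := by
    rintro l'' ⟨h1, h2, h3⟩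
    have h1' : finrank F ↥l'' = 2 := h1
    have hRle : R ≤ l'' := incid_pt hR h1 h2
    have hl''π : ¬ l'' ≤ π₁ := fun h => hRπ₁ (le_trans hRle h)
    have hs4 : finrank F ↥(l'' ⊔ π₁) = 4 := by
      have hlt : π₁ < l'' ⊔ π₁ := lt_of_le_of_ne le_sup_right
        (fun h => hl''π (h ▸ (le_sup_left : l'' ≤ l'' ⊔ π₁)))
      have := Submodule.finrank_lt_finrank_of_lt hlt
      have := rank_le_four (l'' ⊔ π₁)
      omega
    have hQ : finrank F ↥(l'' ⊓ π₁) = 1 := by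
      have := Submodule.finrank_sup_add_finrank_inf_eq l'' π₁
      rw [hs4] at this; omega
    have hRQ : R ⊓ (l'' ⊓ π₁) = ⊥ :=
      pt_inf_eq_bot hR (fun hh => hRπ₁ (le_trans hh inf_le_right))
    have hsupQ : finrank F ↥(R ⊔ (l'' ⊓ π₁)) = 2 := by
      have := Submodule.finrank_sup_add_finrank_inf_eq R (l'' ⊓ π₁)
      rw [hRQ, finrank_bot] at this; omega
    exact ⟨hQ, Submodule.eq_of_le_of_finrank_le (sup_le hRle inf_le_left) (by omega)⟩
  have hcount := count_pts_off l π₁ le_sup_left (by omega)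
  rw [hl2] at hcount
  refine le_trans (Set.ncard_le_ncard_of_injOn (fun l'' => l'' ⊓ π₁) ?_ ?_ (Set.toFinite _)) hcount
  · rintro l'' hmem
    obtain ⟨hQ, -⟩ := hfact l'' hmem
    obtain ⟨h1, h2, h3⟩ := hmem
    refine ⟨hQ, inf_le_right, fun h => ?_⟩
    have : l'' ⊓ π₁ ≤ l ⊓ l'' := le_inf h inf_le_left
    rw [h3] at this
    have := Submodule.finrank_mono this
    rw [finrank_bot] at this
    have hQ' : finrank F ↥(l'' ⊓ π₁) = 1 := hQ
    omega
  · intro l₁ h₁ l₂ h₂ he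
    have k₁ := (hfact l₁ h₁).2
    have k₂ := (hfact l₂ h₂).2
    simp only at he
    rw [← k₁, ← k₂, he]

lemma count_skew_pl (R l : SubPG F) (hR : IsPl R) (hl : IsLn l) (hinc : ¬ LineIncid R l) :
    {l' : SubPG F | IsLn l' ∧ LineIncid R l' ∧ l ⊓ l' = ⊥}.ncard ≤ Fintype.card F ^ 2 := by
  have hR' : finrank F ↥R = 3 := hR
  have hl2 : finrank F ↥l = 2 := hl
  have hlR : ¬ l ≤ R := fun h => hinc (Or.inr h)
  have hsup4 : finrank F ↥(l ⊔ R) = 4 := by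
    have hlt : R < l ⊔ R := lt_of_le_of_ne le_sup_right
      (fun h => hlR (h ▸ (le_sup_left : l ≤ l ⊔ R)))
    have := Submodule.finrank_lt_finrank_of_lt hlt
    have := rank_le_four (l ⊔ R)
    omega
  set T : SubPG F := l ⊓ R with hTdef
  have hT : finrank F ↥T = 1 := by
    have := Submodule.finrank_sup_add_finrank_inf_eq l R
    rw [hsup4] at this; rw [hTdef]; omega
  have hTR : T ≤ R := inf_le_right
  obtain ⟨v₁, hv₁R, hv₁T⟩ := exists_mem_not_mem T R hTR (by omega)
  set m₁ : SubPG F := T ⊔ (F ∙ v₁) with hm₁def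
  have hm₁r : finrank F ↥m₁ = 2 := by rw [hm₁def, finrank_sup_span T v₁ hv₁T, hT]
  have hm₁R : m₁ ≤ R := sup_le hTR ((Submodule.span_singleton_le_iff_mem v₁ R).mpr hv₁R)
  obtain ⟨v₂, hv₂R, hv₂m₁⟩ := exists_mem_not_mem m₁ R hm₁R (by omega)
  set m₂ : SubPG F := T ⊔ (F ∙ v₂) with hm₂def
  have hv₂T : v₂ ∉ T := fun h => hv₂m₁ ((le_sup_left : T ≤ m₁) h)
  have hm₂r : finrank F ↥m₂ = 2 := by rw [hm₂def, finrank_sup_span T v₂ hv₂T, hT]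
  have hm₂R : m₂ ≤ R := sup_le hTR ((Submodule.span_singleton_le_iff_mem v₂ R).mpr hv₂R)
  have hm₁₂ : m₁ ⊓ m₂ = T := by
    have hTle : T ≤ m₁ ⊓ m₂ := le_inf le_sup_left le_sup_left
    have hssup : finrank F ↥(m₁ ⊔ m₂) = 3 := by
      have hlt : m₁ < m₁ ⊔ m₂ := by
        refine lt_of_le_of_ne le_sup_left (fun h => hv₂m₁ ?_)
        rw [h]
        exact (le_sup_right : m₂ ≤ m₁ ⊔ m₂)
          ((le_sup_right : (F ∙ v₂) ≤ m₂) (Submodule.mem_span_singleton_self v₂))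
      have := Submodule.finrank_lt_finrank_of_lt hlt
      have := Submodule.finrank_mono (sup_le hm₁R hm₂R)
      omega
    have hinfr : finrank F ↥(m₁ ⊓ m₂) = 1 := by
      have := Submodule.finrank_sup_add_finrank_inf_eq m₁ m₂
      rw [hssup] at this; omega
    exact (Submodule.eq_of_le_of_finrank_le hTle (by omega)).symm
  have hfact : ∀ m : SubPG F, finrank F ↥m = 2 → m ≤ R →
      ∀ l'' ∈ {l' : SubPG F | IsLn l' ∧ LineIncid R l' ∧ l ⊓ l' = ⊥},
      T ≤ m → IsPt (l'' ⊓ m) ∧ l'' ⊓ m ≠ T := by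
    rintro m hmr hmR l'' ⟨h1, h2, h3⟩ hTm
    have h1' : finrank F ↥l'' = 2 := h1
    have hl''R : l'' ≤ R := incid_pl hR h1 h2
    have hTl'' : ¬ T ≤ l'' := by
      intro h
      have : T ≤ l ⊓ l'' := le_inf inf_le_left h
      rw [h3] at this
      have := Submodule.finrank_mono this
      rw [finrank_bot] at this; omega
    have hs3 : finrank F ↥(l'' ⊔ m) = 3 := by
      have hlt : m < l'' ⊔ m := by
        refine lt_of_le_of_ne le_sup_right (fun h => ?_)
        have hle : l'' ≤ m := h ▸ (le_sup_left : l'' ≤ l'' ⊔ m)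
        have : l'' = m := Submodule.eq_of_le_of_finrank_le hle (by omega)
        exact hTl'' (this ▸ hTm)
      have := Submodule.finrank_lt_finrank_of_lt hlt
      have := Submodule.finrank_mono (sup_le hl''R hmR)
      omega
    have hQ : finrank F ↥(l'' ⊓ m) = 1 := by
      have := Submodule.finrank_sup_add_finrank_inf_eq l'' m
      rw [hs3] at this; omega
    exact ⟨hQ, fun h => hTl'' (h ▸ (inf_le_left : l'' ⊓ m ≤ l''))⟩
  have hkeydec : ∀ l'' ∈ {l' : SubPG F | IsLn l' ∧ LineIncid R l' ∧ l ⊓ l' = ⊥},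
      (l'' ⊓ m₁) ⊔ (l'' ⊓ m₂) = l'' := by
    intro l'' hmem
    obtain ⟨hp₁, hp₁T⟩ := hfact m₁ hm₁r hm₁R l'' hmem le_sup_left
    obtain ⟨hp₂, hp₂T⟩ := hfact m₂ hm₂r hm₂R l'' hmem le_sup_left
    have h1' : finrank F ↥l'' = 2 := hmem.1
    have hne : l'' ⊓ m₁ ≠ l'' ⊓ m₂ := by
      intro h
      have : l'' ⊓ m₁ ≤ m₁ ⊓ m₂ := le_inf inf_le_right (h ▸ inf_le_right)
      rw [hm₁₂] at this
      exact hp₁T (pt_le_eq hp₁ hT this)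
    have hinfb : (l'' ⊓ m₁) ⊓ (l'' ⊓ m₂) = ⊥ :=
      pt_inf_eq_bot hp₁ (fun h => hne (pt_le_eq hp₁ hp₂ h))
    have hsr : finrank F ↥((l'' ⊓ m₁) ⊔ (l'' ⊓ m₂)) = 2 := by
      have := Submodule.finrank_sup_add_finrank_inf_eq (l'' ⊓ m₁) (l'' ⊓ m₂)
      rw [hinfb, finrank_bot] at this
      have e1 : finrank F ↥(l'' ⊓ m₁) = 1 := hp₁
      have e2 : finrank F ↥(l'' ⊓ m₂) = 1 := hp₂
      omega
    exact Submodule.eq_of_le_of_finrank_le (sup_le inf_le_left inf_le_left) (by omega)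
  have hA₁ : ({P : SubPG F | IsPt P ∧ P ≤ m₁} \ {T}).ncard ≤ Fintype.card F := by
    have h1 := count_pts_line m₁ hm₁r
    have hTmem : T ∈ {P : SubPG F | IsPt P ∧ P ≤ m₁} := ⟨hT, le_sup_left⟩
    rw [Set.ncard_diff_singleton_of_mem hTmem]
    omega
  have hA₂ : ({P : SubPG F | IsPt P ∧ P ≤ m₂} \ {T}).ncard ≤ Fintype.card F := by
    have h1 := count_pts_line m₂ hm₂r
    have hTmem : T ∈ {P : SubPG F | IsPt P ∧ P ≤ m₂} := ⟨hT, le_sup_left⟩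
    rw [Set.ncard_diff_singleton_of_mem hTmem]
    omega
  have hfib := fiber_le {l' : SubPG F | IsLn l' ∧ LineIncid R l' ∧ l ⊓ l' = ⊥}
    ({P : SubPG F | IsPt P ∧ P ≤ m₁} \ {T}) (fun l'' => l'' ⊓ m₁) (Fintype.card F) ?_ ?_
  · refine le_trans hfib ?_
    calc ({P : SubPG F | IsPt P ∧ P ≤ m₁} \ {T}).ncard * Fintype.card F
        ≤ Fintype.card F * Fintype.card F := Nat.mul_le_mul_right _ hA₁
      _ = Fintype.card F ^ 2 := (sq (Fintype.card F)).symm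
  · intro l'' hmem
    obtain ⟨hp₁, hp₁T⟩ := hfact m₁ hm₁r hm₁R l'' hmem le_sup_left
    exact ⟨⟨hp₁, inf_le_right⟩, by simpa using hp₁T⟩
  · intro b hb
    refine le_trans (Set.ncard_le_ncard_of_injOn (fun l'' => l'' ⊓ m₂) ?_ ?_ (Set.toFinite _)) hA₂
    · rintro l'' ⟨hmem, -⟩
      obtain ⟨hp₂, hp₂T⟩ := hfact m₂ hm₂r hm₂R l'' hmem le_sup_left
      exact ⟨⟨hp₂, inf_le_right⟩, by simpa using hp₂T⟩
    · rintro l₁ ⟨hm1, he1⟩ l₂ ⟨hm2, he2⟩ he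
      simp only at he he1 he2
      rw [← hkeydec l₁ hm1, ← hkeydec l₂ hm2, he, he1, he2]


lemma triple_ext {d e : SubPG F × SubPG F × SubPG F} (h1 : d.1 = e.1)
    (h2 : d.2.1 = e.2.1) (h3 : d.2.2 = e.2.2) : d = e := by
  obtain ⟨a, b, c⟩ := d
  obtain ⟨a', b', c'⟩ := e
  simp only at h1 h2 h3
  rw [h1, h2, h3]

lemma planes_through_line (l' : SubPG F) (hl' : IsLn l') :
    {W : SubPG F | l' ≤ W ∧ W ≤ ⊤ ∧ finrank F W = finrank F l' + 1}.ncard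
      ≤ Fintype.card F + 1 := by
  have hl2 : finrank F ↥l' = 2 := hl'
  have htop : finrank F ↥(⊤ : SubPG F) = 4 := by rw [finrank_top, finrank_V]
  exact count_between l' ⊤ le_top (by omega)

lemma chambers_line_le (l' : SubPG F) (hl' : IsLn l') :
    {d : SubPG F × SubPG F × SubPG F | IsChamber d ∧ d.2.1 = l'}.ncard
      ≤ (Fintype.card F + 1) * (Fintype.card F + 1) := by
  have hl2 : finrank F ↥l' = 2 := hl'
  have hfib := fiber_le {d : SubPG F × SubPG F × SubPG F | IsChamber d ∧ d.2.1 = l'}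
    {P : SubPG F | IsPt P ∧ P ≤ l'} (fun d => d.1) (Fintype.card F + 1) ?_ ?_
  · exact le_trans hfib (Nat.mul_le_mul_right _ (count_pts_line l' hl'))
  · rintro d ⟨hd, hdl⟩
    exact ⟨hd.1, hdl ▸ hd.2.2.2.1⟩
  · intro b hb
    refine le_trans (Set.ncard_le_ncard_of_injOn (fun d => d.2.2) ?_ ?_ (Set.toFinite _))
      (planes_through_line l' hl')
    · rintro d ⟨⟨hd, hdl⟩, hdb⟩
      refine ⟨hdl ▸ hd.2.2.2.2, le_top, ?_⟩
      have : finrank F ↥d.2.2 = 3 := hd.2.2.1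
      show finrank F ↥d.2.2 = finrank F ↥l' + 1
      omega
    · rintro d₁ ⟨⟨hd₁, hdl₁⟩, hdb₁⟩ d₂ ⟨⟨hd₂, hdl₂⟩, hdb₂⟩ he
      simp only at he hdb₁ hdb₂
      exact triple_ext (hdb₁.trans hdb₂.symm) (hdl₁.trans hdl₂.symm) he

lemma chambers_skewline_le (c : SubPG F × SubPG F × SubPG F) (hc : IsChamber c)
    (l' : SubPG F) (hl' : IsLn l') (hskew : c.2.1 ⊓ l' = ⊥) :
    {d : SubPG F × SubPG F × SubPG F | IsChamber d ∧ d.2.1 = l' ∧ ¬ Opp c d}.ncard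
      ≤ 2 * Fintype.card F + 1 := by
  obtain ⟨hPpt, hlln, hπpl, hPl, hlπ⟩ := hc
  have hP1 : finrank F ↥c.1 = 1 := hPpt
  have hl2 : finrank F ↥c.2.1 = 2 := hlln
  have hπ3 : finrank F ↥c.2.2 = 3 := hπpl
  have hl'2 : finrank F ↥l' = 2 := hl'
  have hPl' : ¬ c.1 ≤ l' := by
    intro h
    have : c.1 ≤ ⊥ := hskew ▸ le_inf hPl h
    exact pt_ne_bot hPpt (le_bot_iff.mp this)
  have hπe : finrank F ↥(l' ⊔ c.1) = 3 := by
    have hinf : l' ⊓ c.1 = ⊥ := by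
      rw [inf_comm]; exact pt_inf_eq_bot hPpt hPl'
    have := Submodule.finrank_sup_add_finrank_inf_eq l' c.1
    rw [hinf, finrank_bot] at this; omega
  have hl'π : ¬ l' ≤ c.2.2 := by
    intro h
    have hs := Submodule.finrank_sup_add_finrank_inf_eq c.2.1 l'
    rw [hskew, finrank_bot] at hs
    have := Submodule.finrank_mono (sup_le hlπ h)
    omega
  have hs4 : finrank F ↥(l' ⊔ c.2.2) = 4 := by
    have hlt : c.2.2 < l' ⊔ c.2.2 := lt_of_le_of_ne le_sup_right
      (fun h => hl'π (h ▸ (le_sup_left : l' ≤ l' ⊔ c.2.2)))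
    have := Submodule.finrank_lt_finrank_of_lt hlt
    have := rank_le_four (l' ⊔ c.2.2)
    omega
  have hPe : finrank F ↥(l' ⊓ c.2.2) = 1 := by
    have := Submodule.finrank_sup_add_finrank_inf_eq l' c.2.2
    rw [hs4] at this; omega
  set e : SubPG F × SubPG F × SubPG F := (l' ⊓ c.2.2, l', l' ⊔ c.1) with hedef
  set U1 := {d : SubPG F × SubPG F × SubPG F |
    (IsChamber d ∧ d.2.1 = l' ∧ d.2.2 = l' ⊔ c.1) ∧ d ≠ e} with hU1def
  set U2 := {d : SubPG F × SubPG F × SubPG F |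
    (IsChamber d ∧ d.2.1 = l' ∧ d.1 = l' ⊓ c.2.2) ∧ d ≠ e} with hU2def
  have hsub : {d : SubPG F × SubPG F × SubPG F | IsChamber d ∧ d.2.1 = l' ∧ ¬ Opp c d}
      ⊆ insert e (U1 ∪ U2) := by
    rintro d ⟨hd, hdl, hdno⟩
    by_cases hde : d = e
    · exact Set.mem_insert_iff.mpr (Or.inl hde)
    refine Set.mem_insert_iff.mpr (Or.inr ?_)
    have hmid : c.2.1 ⊓ d.2.1 = ⊥ := by rw [hdl]; exact hskew
    have hAC : c.1 ≤ d.2.2 ∨ d.1 ≤ c.2.2 := by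
      by_contra hcon
      push_neg at hcon
      exact hdno ⟨hcon.1, hmid, hcon.2⟩
    rcases hAC with hA | hC
    · left
      refine ⟨⟨hd, hdl, ?_⟩, hde⟩
      have hge : l' ⊔ c.1 ≤ d.2.2 := sup_le (hdl ▸ hd.2.2.2.2) hA
      have h3 : finrank F ↥d.2.2 = 3 := hd.2.2.1
      exact (Submodule.eq_of_le_of_finrank_le hge (by omega)).symm
    · right
      refine ⟨⟨hd, hdl, ?_⟩, hde⟩
      have hle : d.1 ≤ l' ⊓ c.2.2 := le_inf (hdl ▸ hd.2.2.2.1) hC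
      exact pt_le_eq hd.1 hPe hle
  have hU1c : U1.ncard ≤ Fintype.card F := by
    have htgt : ({P : SubPG F | IsPt P ∧ P ≤ l'} \ {l' ⊓ c.2.2}).ncard ≤ Fintype.card F := by
      have h1 := count_pts_line l' hl'
      have hmem : l' ⊓ c.2.2 ∈ {P : SubPG F | IsPt P ∧ P ≤ l'} := ⟨hPe, inf_le_left⟩
      rw [Set.ncard_diff_singleton_of_mem hmem]
      omega
    refine le_trans (Set.ncard_le_ncard_of_injOn (fun d => d.1) ?_ ?_ (Set.toFinite _)) htgt
    · rintro d ⟨⟨hd, hdl, hdπ⟩, hde⟩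
      refine ⟨⟨hd.1, hdl ▸ hd.2.2.2.1⟩, ?_⟩
      simp only [Set.mem_singleton_iff]
      intro h
      exact hde (triple_ext h hdl hdπ)
    · rintro d₁ ⟨⟨hd₁, hdl₁, hdπ₁⟩, -⟩ d₂ ⟨⟨hd₂, hdl₂, hdπ₂⟩, -⟩ he
      exact triple_ext he (hdl₁.trans hdl₂.symm) (hdπ₁.trans hdπ₂.symm)
  have hU2c : U2.ncard ≤ Fintype.card F := by
    have htgt : ({W : SubPG F | l' ≤ W ∧ W ≤ ⊤ ∧ finrank F W = finrank F l' + 1}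
        \ {l' ⊔ c.1}).ncard ≤ Fintype.card F := by
      have h1 := planes_through_line l' hl'
      have hmem : l' ⊔ c.1 ∈ {W : SubPG F | l' ≤ W ∧ W ≤ ⊤ ∧ finrank F W = finrank F l' + 1} :=
        ⟨le_sup_left, le_top, by omega⟩
      rw [Set.ncard_diff_singleton_of_mem hmem]
      omega
    refine le_trans (Set.ncard_le_ncard_of_injOn (fun d => d.2.2) ?_ ?_ (Set.toFinite _)) htgt
    · rintro d ⟨⟨hd, hdl, hdP⟩, hde⟩
      have h3 : finrank F ↥d.2.2 = 3 := hd.2.2.1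
      refine ⟨⟨hdl ▸ hd.2.2.2.2, le_top, show finrank F ↥d.2.2 = finrank F ↥l' + 1 by omega⟩, ?_⟩
      simp only [Set.mem_singleton_iff]
      intro h
      exact hde (triple_ext hdP hdl h)
    · rintro d₁ ⟨⟨hd₁, hdl₁, hdP₁⟩, -⟩ d₂ ⟨⟨hd₂, hdl₂, hdP₂⟩, -⟩ he
      exact triple_ext (hdP₁.trans hdP₂.symm) (hdl₁.trans hdl₂.symm) he
  calc {d : SubPG F × SubPG F × SubPG F | IsChamber d ∧ d.2.1 = l' ∧ ¬ Opp c d}.ncard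
      ≤ (insert e (U1 ∪ U2)).ncard := Set.ncard_le_ncard hsub (Set.toFinite _)
    _ ≤ (U1 ∪ U2).ncard + 1 := Set.ncard_insert_le _ _
    _ ≤ (U1.ncard + U2.ncard) + 1 := by
        have := Set.ncard_union_le U1 U2
        omega
    _ ≤ 2 * Fintype.card F + 1 := by omega

lemma main_count (c : SubPG F × SubPG F × SubPG F) (hc : IsChamber c) (R : SubPG F)
    (hR : IsPt R ∨ IsPl R) (hinc : ¬ LineIncid R c.2.1) :
    {d : SubPG F × SubPG F × SubPG F | IsChamber d ∧ LineIncid R d.2.1 ∧ ¬ Opp c d}.ncard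
      ≤ (Fintype.card F + 1) ^ 3 + Fintype.card F ^ 2 * (2 * Fintype.card F + 1) := by
  set q := Fintype.card F with hqdef
  have hlln : IsLn c.2.1 := hc.2.1
  set S := {d : SubPG F × SubPG F × SubPG F | IsChamber d ∧ LineIncid R d.2.1 ∧ ¬ Opp c d}
    with hSdef
  set Sm := {d ∈ S | c.2.1 ⊓ d.2.1 ≠ ⊥} with hSmdef
  set Ss := {d ∈ S | c.2.1 ⊓ d.2.1 = ⊥} with hSsdef
  have hcover : S ⊆ Sm ∪ Ss := by
    intro d hd
    by_cases h : c.2.1 ⊓ d.2.1 = ⊥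
    · exact Or.inr ⟨hd, h⟩
    · exact Or.inl ⟨hd, h⟩
  have hTm : {l' : SubPG F | IsLn l' ∧ LineIncid R l' ∧ c.2.1 ⊓ l' ≠ ⊥}.ncard ≤ q + 1 := by
    rcases hR with hRpt | hRpl
    · exact count_meet_pt R c.2.1 hRpt hlln hinc
    · exact count_meet_pl R c.2.1 hRpl hlln hinc
  have hTs : {l' : SubPG F | IsLn l' ∧ LineIncid R l' ∧ c.2.1 ⊓ l' = ⊥}.ncard ≤ q ^ 2 := by
    rcases hR with hRpt | hRpl
    · exact count_skew_pt R c.2.1 hRpt hlln hinc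
    · exact count_skew_pl R c.2.1 hRpl hlln hinc
  have hSm : Sm.ncard ≤ (q + 1) * ((q + 1) * (q + 1)) := by
    have hfib := fiber_le Sm {l' : SubPG F | IsLn l' ∧ LineIncid R l' ∧ c.2.1 ⊓ l' ≠ ⊥}
      (fun d => d.2.1) ((q + 1) * (q + 1)) ?_ ?_
    · exact le_trans hfib (Nat.mul_le_mul_right _ hTm)
    · rintro d ⟨⟨hd, hdi, -⟩, hdm⟩
      exact ⟨hd.2.1, hdi, hdm⟩
    · intro b hb
      refine le_trans (Set.ncard_le_ncard ?_ (Set.toFinite _)) (chambers_line_le b hb.1)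
      rintro d ⟨⟨⟨hd, -, -⟩, -⟩, hdb⟩
      exact ⟨hd, hdb⟩
  have hSs : Ss.ncard ≤ q ^ 2 * (2 * q + 1) := by
    have hfib := fiber_le Ss {l' : SubPG F | IsLn l' ∧ LineIncid R l' ∧ c.2.1 ⊓ l' = ⊥}
      (fun d => d.2.1) (2 * q + 1) ?_ ?_
    · exact le_trans hfib (Nat.mul_le_mul_right _ hTs)
    · rintro d ⟨⟨hd, hdi, -⟩, hdm⟩
      exact ⟨hd.2.1, hdi, hdm⟩
    · intro b hb
      refine le_trans (Set.ncard_le_ncard ?_ (Set.toFinite _))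
        (chambers_skewline_le c hc b hb.1 hb.2.2)
      rintro d ⟨⟨⟨hd, -, hdno⟩, -⟩, hdb⟩
      exact ⟨hd, hdb, hdno⟩
  have hun : S.ncard ≤ Sm.ncard + Ss.ncard :=
    le_trans (Set.ncard_le_ncard hcover (Set.toFinite _)) (Set.ncard_union_le _ _)
  have harith : (q + 1) * ((q + 1) * (q + 1)) = (q + 1) ^ 3 := by ring
  omega

end PGaux

theorem inter_FF_card_le (q : ℕ) (hq : Fintype.card F = q)
    (X : Set (SubPG F × SubPG F × SubPG F)) (hX : MaxNonOppSet X)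
    (R : SubPG F) (hR : IsPt R ∨ IsPl R) (hne : X ≠ FF R) :
    (X ∩ FF R).ncard ≤ (q + 1) ^ 3 + q ^ 2 * (2 * q + 1) := by
  subst hq
  have ffno : ∀ d ∈ FF R, ∀ d' ∈ FF R, ¬ Opp d d' := by
    rintro d ⟨hd, hdi⟩ d' ⟨hd', hdi'⟩ ⟨o1, o2, o3⟩
    rcases hR with hRpt | hRpl
    · have h1 : R ≤ d.2.1 := PGaux.incid_pt hRpt hd.2.1 hdi
      have h2 : R ≤ d'.2.1 := PGaux.incid_pt hRpt hd'.2.1 hdi'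
      have h3 : R ≤ ⊥ := o2 ▸ le_inf h1 h2
      exact PGaux.pt_ne_bot hRpt (le_bot_iff.mp h3)
    · have h1 := PGaux.incid_pl hRpl hd.2.1 hdi
      have h2 := PGaux.incid_pl hRpl hd'.2.1 hdi'
      have hs := Submodule.finrank_sup_add_finrank_inf_eq d.2.1 d'.2.1
      rw [o2, finrank_bot] at hs
      have h4 : finrank F ↥(d.2.1 ⊔ d'.2.1) ≤ 3 := by
        have := Submodule.finrank_mono (sup_le h1 h2)
        have hR3 : finrank F ↥R = 3 := hRpl
        omega
      have r1 : finrank F ↥d.2.1 = 2 := hd.2.1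
      have r2 : finrank F ↥d'.2.1 = 2 := hd'.2.1
      omega
  obtain ⟨c, hcX, hcinc⟩ : ∃ c ∈ X, ¬ LineIncid R c.2.1 := by
    by_contra h
    push_neg at h
    have hsub : X ⊆ FF R := fun d hd => ⟨hX.1.1 d hd, h d hd⟩
    obtain ⟨d, hdF, hdX⟩ := Set.exists_of_ssubset (hsub.ssubset_of_ne hne)
    obtain ⟨c', hc'X, hopp⟩ := hX.2 d hdF.1 hdX
    exact ffno d hdF c' (hsub hc'X) hopp
  have hchc : IsChamber c := hX.1.1 c hcX
  have hsub2 : X ∩ FF R ⊆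
      {d : SubPG F × SubPG F × SubPG F | IsChamber d ∧ LineIncid R d.2.1 ∧ ¬ Opp c d} := by
    rintro d ⟨hdX, hdF⟩
    exact ⟨hdF.1, hdF.2, hX.1.2 c hcX d hdX⟩
  exact le_trans (Set.ncard_le_ncard hsub2 (Set.toFinite _))
    (PGaux.main_count c hchc R hR hcinc)
end
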